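/- arXiv:2502.18945 — 8 statements merged into one kernel-verified Lean document; each statement's English description precedes it below -/
import Mathlib

section
/- Let G be a finite simple graph and X a subset of its vertex set. Suppose that (1) the induced subgraph G − X is (2,1)-decomposable; (2) M is a set of edges of G forming a matching, each edge of which has both endpoints in X; and (3) there is an acyclic orientation D of all edges of G that are incident with at least one vertex of X and do not belong to M, such that every edge with exactly one endpoint in X is oriented from X towards its endpoint outside X, and every vertex of X has out-degree at most 2 in D. Then G is (2,1)-decomposable. -/
/-- A graph `G` is `d`-degenerate if every nonempty (induced) subgraph has a
vertex of degree at most `d`. -/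
def SimpleGraph.DegenerateLE {V : Type*} (G : SimpleGraph V) (d : ℕ) : Prop :=
  ∀ S : Set V, S.Nonempty → ∃ v ∈ S, (S ∩ G.neighborSet v).ncard ≤ d

/-- A graph `G` is `(d, h)`-decomposable if there is a subgraph `H` of `G` with
maximum degree at most `h` such that `G - E(H)` is `d`-degenerate. -/
def SimpleGraph.IsDecomposable {V : Type*} (G : SimpleGraph V) (d h : ℕ) : Prop :=
  ∃ H : SimpleGraph V, H ≤ G ∧ (∀ v, (H.neighborSet v).ncard ≤ h) ∧
    (G \ H).DegenerateLE d

/-!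
Take `H = M ∪ H₀`, where `H₀` is the max-degree-1 part of a decomposition of `G - X`. To peel a
vertex off a set `S` meeting `X`, take a source of `D` inside `S ∩ X`: since edges leaving `X`
point out of `X`, every edge of `G - E(H)` from it into `S` is an out-edge, so its degree into `S`
is at most `2`. A set missing `X` is handled by the decomposition of `G - X`, which `H` restricts to.
-/

lemma exists_mem_forall_not_rel_of_acyclic {V : Type*} [Finite V] {D : V → V → Prop}
    (hD : ∀ v, ¬ Relation.TransGen D v v) {T : Set V} (hT : T.Nonempty) :
    ∃ v ∈ T, ∀ w ∈ T, ¬ D w v := by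
  have : IsTrans V (Relation.TransGen D) := ⟨fun _ _ _ => Relation.TransGen.trans⟩
  have : Std.Irrefl (Relation.TransGen D) := ⟨hD⟩
  obtain ⟨v, hv, hmin⟩ :=
    (Finite.wellFounded_of_trans_of_irrefl (Relation.TransGen D)).has_min T hT
  exact ⟨v, hv, fun w hw h => hmin w hw (.single h)⟩

namespace SimpleGraph

variable {V W : Type*}

lemma ncard_neighborSet_map_le (f : V ↪ W) {H : SimpleGraph V} {k : ℕ}
    (hH : ∀ v, (H.neighborSet v).ncard ≤ k) (w : W) : ((H.map f).neighborSet w).ncard ≤ k := by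
  by_cases hw : w ∈ Set.range f
  · obtain ⟨v, rfl⟩ := hw
    rw [neighborSet_map, Set.ncard_image_of_injective _ f.injective]
    exact hH v
  · have : (H.map f).neighborSet w = ∅ := by
      ext u
      simp only [mem_neighborSet, map_adj, Set.mem_empty_iff_false, iff_false]
      rintro ⟨v, -, -, rfl, -⟩
      exact hw ⟨v, rfl⟩
    simp [this]

lemma ncard_neighborSet_sup_le_of_disjoint_support {M N : SimpleGraph V} {k : ℕ}
    (hMN : Disjoint M.support N.support) (hM : ∀ v, (M.neighborSet v).ncard ≤ k)
    (hN : ∀ v, (N.neighborSet v).ncard ≤ k) (v : V) : ((M ⊔ N).neighborSet v).ncard ≤ k := by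
  have neighborSet_eq_empty {G : SimpleGraph V} (hv : v ∉ G.support) : G.neighborSet v = ∅ :=
    Set.eq_empty_of_forall_notMem fun w hw => hv (G.mem_support.2 ⟨w, hw⟩)
  rw [neighborSet_sup]
  by_cases hv : v ∈ M.support
  · rw [neighborSet_eq_empty (Set.disjoint_left.1 hMN hv), Set.union_empty]
    exact hM v
  · rw [neighborSet_eq_empty hv, Set.empty_union]
    exact hN v

lemma DegenerateLE.of_induce_compl {G : SimpleGraph V} {X : Set V} {d : ℕ}
    (hX : ∀ S : Set V, (S ∩ X).Nonempty → ∃ v ∈ S ∩ X, (S ∩ G.neighborSet v).ncard ≤ d)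
    (hXc : (G.induce Xᶜ).DegenerateLE d) : G.DegenerateLE d := by
  intro S hS
  by_cases hSX : (S ∩ X).Nonempty
  · obtain ⟨v, hv, hdeg⟩ := hX S hSX
    exact ⟨v, hv.1, hdeg⟩
  have hSXc : S ⊆ Xᶜ := fun w hw hwX => hSX ⟨w, hw, hwX⟩
  obtain ⟨w, hw⟩ := hS
  obtain ⟨a, haS, hdeg⟩ := hXc (Subtype.val ⁻¹' S) ⟨⟨w, hSXc hw⟩, hw⟩
  refine ⟨a, haS, ?_⟩
  have hrestrict : S ∩ G.neighborSet a =
      Subtype.val '' (Subtype.val ⁻¹' S ∩ (G.induce Xᶜ).neighborSet a) := by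
    ext u
    constructor
    · rintro ⟨huS, hadj⟩
      exact ⟨⟨u, hSXc huS⟩, ⟨huS, hadj⟩, rfl⟩
    · rintro ⟨b, ⟨hbS, hadj⟩, rfl⟩
      exact ⟨hbS, hadj⟩
  rwa [hrestrict, Set.ncard_image_of_injective _ Subtype.val_injective]

lemma exists_ncard_inter_neighborSet_le_of_acyclic [Finite V] {K : SimpleGraph V} {X : Set V}
    {D : V → V → Prop} {d : ℕ} (hD : ∀ v, ¬ Relation.TransGen D v v)
    (hKD : ∀ u ∈ X, ∀ w, K.Adj u w → D u w ∨ (w ∈ X ∧ D w u))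
    (hDdeg : ∀ u ∈ X, {w | D u w}.ncard ≤ d) (S : Set V) (hS : (S ∩ X).Nonempty) :
    ∃ v ∈ S ∩ X, (S ∩ K.neighborSet v).ncard ≤ d := by
  obtain ⟨v, hv, hsource⟩ := exists_mem_forall_not_rel_of_acyclic hD hS
  refine ⟨v, hv, le_trans (Set.ncard_le_ncard ?_ (Set.toFinite _)) (hDdeg v hv.2)⟩
  rintro w ⟨hwS, hadj⟩
  rcases hKD v hv.2 w hadj with hvw | ⟨hwX, hwv⟩
  · exact hvw
  · exact absurd hwv (hsource w ⟨hwS, hwX⟩)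

end SimpleGraph

open SimpleGraph in
theorem statement0_general {V : Type*} [Fintype V] (G : SimpleGraph V) (X : Set V)
    (M : SimpleGraph V) (hMG : M ≤ G)
    (hMmatch : ∀ v, (M.neighborSet v).ncard ≤ 1)
    (hMX : ∀ u w, M.Adj u w → u ∈ X ∧ w ∈ X)
    (hGX : (G.induce (Xᶜ : Set V)).IsDecomposable 2 1)
    (D : V → V → Prop)
    (hDtotal : ∀ u w, G.Adj u w → ¬ M.Adj u w → (u ∈ X ∨ w ∈ X) → D u w ∨ D w u)
    (hDacyclic : ∀ v, ¬ Relation.TransGen D v v)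
    (hDout : ∀ u w, u ∈ X → w ∉ X → G.Adj u w → ¬ M.Adj u w → D u w)
    (hDdeg : ∀ u ∈ X, {w | D u w}.ncard ≤ 2) :
    G.IsDecomposable 2 1 := by
  obtain ⟨H₀, hH₀G, hH₀deg, hH₀dgn⟩ := hGX
  have hdisj : Disjoint M.support H₀.spanningCoe.support := by
    rw [support_spanningCoe, Set.disjoint_right]
    rintro _ ⟨a, -, rfl⟩ ha
    obtain ⟨w, hw⟩ := M.mem_support.1 ha
    exact a.2 (hMX _ _ hw).1
  refine ⟨M ⊔ H₀.spanningCoe,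
    sup_le hMG ((map_monotone _ hH₀G).trans (G.spanningCoe_induce_le _)),
    ncard_neighborSet_sup_le_of_disjoint_support hdisj hMmatch
      (ncard_neighborSet_map_le _ hH₀deg), DegenerateLE.of_induce_compl (X := X) ?_ ?_⟩
  · refine exists_ncard_inter_neighborSet_le_of_acyclic hDacyclic ?_ hDdeg
    rintro u hu w ⟨hGuw, hHuw⟩
    have hMuw : ¬ M.Adj u w := fun h => hHuw (Or.inl h)
    by_cases hw : w ∈ X
    · exact (hDtotal u w hGuw hMuw (Or.inl hu)).imp_right (⟨hw, ·⟩)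
    · exact Or.inl (hDout u w hu hw hGuw hMuw)
  · have hinduce : (G \ (M ⊔ H₀.spanningCoe)).induce Xᶜ = G.induce Xᶜ \ H₀ := by
      ext a b
      have hM : ¬ M.Adj a b := fun h => a.2 (hMX _ _ h).1
      have hH₀ : H₀.spanningCoe.Adj a b ↔ H₀.Adj a b := map_adj_apply
      simp only [comap_adj, sdiff_adj, sup_adj, Function.Embedding.subtype_apply, hH₀]
      tauto
    rwa [hinduce]

/-- If `G - X` is `(2,1)`-decomposable, `M` is a matching of `G` with all endpoints
in `X`, and there is an acyclic orientation `D` of the edges of `G` incident with `X`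
and not in `M` such that edges leaving `X` are oriented away from `X` and every vertex
of `X` has out-degree at most `2`, then `G` is `(2,1)`-decomposable. -/
theorem statement0 {V : Type*} [Fintype V] (G : SimpleGraph V) (X : Set V)
    (M : SimpleGraph V) (hMG : M ≤ G)
    (hMmatch : ∀ v, (M.neighborSet v).ncard ≤ 1)
    (hMX : ∀ u w, M.Adj u w → u ∈ X ∧ w ∈ X)
    (hGX : (G.induce (Xᶜ : Set V)).IsDecomposable 2 1)
    (D : V → V → Prop)
    (hDdom : ∀ u w, D u w → G.Adj u w ∧ ¬ M.Adj u w ∧ (u ∈ X ∨ w ∈ X))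
    (hDtotal : ∀ u w, G.Adj u w → ¬ M.Adj u w → (u ∈ X ∨ w ∈ X) → D u w ∨ D w u)
    (hDasymm : ∀ u w, D u w → ¬ D w u)
    (hDacyclic : ∀ v, ¬ Relation.TransGen D v v)
    (hDout : ∀ u w, u ∈ X → w ∉ X → G.Adj u w → ¬ M.Adj u w → D u w)
    (hDdeg : ∀ u ∈ X, {w | D u w}.ncard ≤ 2) :
    G.IsDecomposable 2 1 :=
  statement0_general G X M hMG hMmatch hMX hGX D hDtotal hDacyclic hDout hDdeg
end

section
/- Let G be a finite simple graph and let u, v be adjacent vertices of G with deg_G(u) = deg_G(v) = 3. If G − {u, v} is (2,1)-decomposable, then G is (2,1)-decomposable. -/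
/-!
Take a decomposition `H` of `G - {u, v}` and add the edge `uv` to `H`.
Its maximum degree stays at most `1`, because `u` and `v` are not vertices of `G - {u, v}`.
After removing `uv`, both `u` and `v` have degree `2`, so a nonempty vertex set either contains
one of them, which then has at most two neighbours in it, or lies inside `G - {u, v}`, where the
degeneracy of the old decomposition applies.
-/

theorem Set.encard_sdiff_singleton_of_ncard_eq {α : Type*} {s : Set α} {a : α} {n : ℕ}
    (ha : a ∈ s) (hs : s.ncard = n + 1) : (s \ {a}).encard = n := by
  have hfin : s.Finite := Set.finite_of_ncard_ne_zero (by omega)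
  rw [← hfin.sdiff.cast_ncard_eq, Set.ncard_sdiff_singleton_of_mem ha, hs, Nat.add_sub_cancel]

namespace SimpleGraph

variable {V : Type*}

/-- `encard`, not `ncard`: a vertex of infinite degree must not pass as one of degree `0`. -/
theorem DegenerateLE.of_induce {G : SimpleGraph V} {C : Set V} {d : ℕ}
    (hout : ∀ v ∉ C, (G.neighborSet v).encard ≤ d) (hC : (G.induce C).DegenerateLE d) :
    G.DegenerateLE d := by
  rintro S ⟨w, hw⟩
  by_cases hS : ∃ v ∈ S, v ∉ C
  · obtain ⟨v, hvS, hvC⟩ := hS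
    have hle := (Set.encard_le_encard (Set.inter_subset_right (s := S))).trans (hout v hvC)
    exact ⟨v, hvS, (Set.encard_le_coe_iff_finite_ncard_le.1 hle).2⟩
  push Not at hS
  obtain ⟨c, hcS, hc⟩ := hC (Subtype.val ⁻¹' S) ⟨⟨w, hS w hw⟩, hw⟩
  have himage : S ∩ G.neighborSet c =
      Subtype.val '' (Subtype.val ⁻¹' S ∩ (G.induce C).neighborSet c) := by
    ext x
    constructor
    · rintro ⟨hxS, hx⟩
      exact ⟨⟨x, hS x hxS⟩, ⟨hxS, hx⟩, rfl⟩
    · rintro ⟨y, ⟨hyS, hy⟩, rfl⟩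
      exact ⟨hyS, hy⟩
  exact ⟨c, hcS, by rwa [himage, Set.ncard_image_of_injective _ Subtype.val_injective]⟩

def extendByEdge (C : Set V) (H : SimpleGraph C) (u v : V) : SimpleGraph V :=
  H.map (Function.Embedding.subtype (· ∈ C)) ⊔ edge u v

variable {G : SimpleGraph V} {C : Set V} {H : SimpleGraph C} {u v : V}

theorem extendByEdge_le (hH : H ≤ G.induce C) (huv : G.Adj u v) : extendByEdge C H u v ≤ G := by
  refine sup_le ?_ ((edge_le_iff G).2 (.inr huv))
  rintro _ _ ⟨-, a, b, hab, rfl, rfl⟩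
  exact hH hab

theorem neighborSet_extendByEdge_of_mem (hu : u ∉ C) (hv : v ∉ C) (c : C) :
    (extendByEdge C H u v).neighborSet c = Subtype.val '' H.neighborSet c := by
  have hedge : (edge u v).neighborSet c = ∅ := by
    ext x
    simp only [mem_neighborSet, edge_adj, Set.mem_empty_iff_false, iff_false]
    grind [c.2]
  rw [extendByEdge, neighborSet_sup, hedge, Set.union_empty]
  exact H.neighborSet_map (Function.Embedding.subtype _) c

theorem neighborSet_extendByEdge_left (hu : u ∉ C) (huv : u ≠ v) :
    (extendByEdge C H u v).neighborSet u = {v} := by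
  ext x
  simp only [extendByEdge, neighborSet_sup, Set.mem_union, mem_neighborSet, edge_adj, map_adj,
    Function.Embedding.subtype_apply, Set.mem_singleton_iff]
  grind [Subtype.prop]

theorem extendByEdge_comm : extendByEdge C H u v = extendByEdge C H v u := by
  rw [extendByEdge, edge_comm, extendByEdge]

theorem induce_sdiff_extendByEdge (hu : u ∉ C) (hv : v ∉ C) :
    (G \ extendByEdge C H u v).induce C = G.induce C \ H := by
  ext a b
  simp only [comap_adj, sdiff_adj, extendByEdge, sup_adj, edge_adj, map_adj,
    Function.Embedding.subtype_apply, Subtype.val_inj, exists_eq_right_right, exists_eq_right]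
  grind

end SimpleGraph

open SimpleGraph in
theorem statement2_general {V : Type*} (G : SimpleGraph V) (u v : V)
    (hadj : G.Adj u v)
    (hu : (G.neighborSet u).ncard = 3) (hv : (G.neighborSet v).ncard = 3)
    (h : (G.induce (({u, v} : Set V)ᶜ)).IsDecomposable 2 1) :
    G.IsDecomposable 2 1 := by
  set C : Set V := ({u, v} : Set V)ᶜ
  obtain ⟨H, hHG, hHdeg, hdegen⟩ := h
  have huC : u ∉ C := by simp [C]
  have hvC : v ∉ C := by simp [C]
  have hnotC : ∀ a ∉ C, a = u ∨ a = v := by simp [C, or_iff_not_imp_left]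
  have huv : u ≠ v := G.ne_of_adj hadj
  have hNu := neighborSet_extendByEdge_left (H := H) huC huv
  have hNv := extendByEdge_comm (H := H) ▸ neighborSet_extendByEdge_left (H := H) hvC huv.symm
  refine ⟨extendByEdge C H u v, extendByEdge_le hHG hadj, fun a ↦ ?_, ?_⟩
  · by_cases ha : a ∈ C
    · rw [neighborSet_extendByEdge_of_mem huC hvC ⟨a, ha⟩,
        Set.ncard_image_of_injective _ Subtype.val_injective]
      exact hHdeg _
    · rcases hnotC a ha with rfl | rfl <;> simp [hNu, hNv]
  · refine DegenerateLE.of_induce (C := C) (fun a ha ↦ ?_)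
      (by rwa [induce_sdiff_extendByEdge huC hvC])
    rcases hnotC a ha with rfl | rfl
    · rw [neighborSet_sdiff, hNu]
      exact (Set.encard_sdiff_singleton_of_ncard_eq (s := G.neighborSet _) hadj hu).le
    · rw [neighborSet_sdiff, hNv]
      exact (Set.encard_sdiff_singleton_of_ncard_eq (s := G.neighborSet _) hadj.symm hv).le

/-- If `u` and `v` are adjacent `3`-vertices and `G - {u, v}` is
`(2,1)`-decomposable, then `G` is `(2,1)`-decomposable. -/
theorem statement2 {V : Type*} [Fintype V] (G : SimpleGraph V) (u v : V)
    (hadj : G.Adj u v)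
    (hu : (G.neighborSet u).ncard = 3) (hv : (G.neighborSet v).ncard = 3)
    (h : (G.induce (({u, v} : Set V)ᶜ)).IsDecomposable 2 1) :
    G.IsDecomposable 2 1 :=
  statement2_general G u v hadj hu hv h
end

section
/- Let G be a finite simple graph containing four distinct vertices b1, b2, b3, b4 such that b1b2, b2b3, b3b4, b4b1 are edges of G, the cycle b1b2b3b4 has no chord (i.e., b1b3 and b2b4 are not edges of G), deg_G(b1) = deg_G(b3) = 3, and deg_G(b2) = deg_G(b4) = 4. If G − {b1, b2, b3, b4} is (2,1)-decomposable, then G is (2,1)-decomposable. -/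
namespace SimpleGraph

variable {V : Type*}

def MaxDegreeLE (G : SimpleGraph V) (k : ℕ) : Prop :=
  ∀ v, (G.neighborSet v).ncard ≤ k

lemma neighborSet_eq_empty_of_notMem_support {G : SimpleGraph V} {v : V} (hv : v ∉ G.support) :
    G.neighborSet v = ∅ :=
  Set.not_nonempty_iff_eq_empty.1 fun h ↦ hv (G.nonempty_neighborSet.1 h)

lemma MaxDegreeLE.sup_of_disjoint_support {G₁ G₂ : SimpleGraph V} {k : ℕ}
    (h₁ : G₁.MaxDegreeLE k) (h₂ : G₂.MaxDegreeLE k) (hd : Disjoint G₁.support G₂.support) :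
    (G₁ ⊔ G₂).MaxDegreeLE k := by
  intro v
  rw [neighborSet_sup]
  by_cases hv : v ∈ G₂.support
  · rw [neighborSet_eq_empty_of_notMem_support (hd.notMem_of_mem_right hv), Set.empty_union]
    exact h₂ v
  · rw [neighborSet_eq_empty_of_notMem_support hv, Set.union_empty]
    exact h₁ v

lemma MaxDegreeLE.spanningCoe {s : Set V} {G : SimpleGraph s} {k : ℕ} (h : G.MaxDegreeLE k) :
    G.spanningCoe.MaxDegreeLE k := by
  intro v
  by_cases hv : v ∈ s
  · have : G.spanningCoe.neighborSet v = _ :=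
      G.neighborSet_map (Function.Embedding.subtype _) ⟨v, hv⟩
    rw [this, Set.ncard_image_of_injective _ (Function.Embedding.injective _)]
    exact h _
  · have : v ∉ G.spanningCoe.support := by simp [support_spanningCoe, hv]
    simp [neighborSet_eq_empty_of_notMem_support this]

lemma maxDegreeLE_edge (u v : V) : (edge u v).MaxDegreeLE 1 := by
  intro w
  have hsub : (edge u v).neighborSet w ⊆ {u, v} := fun x hx ↦ by
    simp only [mem_neighborSet, edge_adj] at hx
    grind
  refine (Set.ncard_le_one ((Set.toFinite {u, v}).subset hsub)).2 fun a ha b hb ↦ ?_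
  simp only [mem_neighborSet, edge_adj] at ha hb
  grind

lemma support_sup (G₁ G₂ : SimpleGraph V) : (G₁ ⊔ G₂).support = G₁.support ∪ G₂.support := by
  ext v
  simp only [mem_support, sup_adj, Set.mem_union, exists_or]

lemma support_edge_subset (u v : V) : (edge u v).support ⊆ {u, v} := fun w hw ↦ by
  obtain ⟨x, hx⟩ := (mem_support _).1 hw
  rw [edge_adj] at hx
  grind

lemma maxDegreeLE_edge_sup_edge {a b c d : V} (hac : a ≠ c) (had : a ≠ d) (hbc : b ≠ c)
    (hbd : b ≠ d) : (edge a b ⊔ edge c d).MaxDegreeLE 1 :=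
  (maxDegreeLE_edge a b).sup_of_disjoint_support (maxDegreeLE_edge c d) <|
    Set.disjoint_of_subset (support_edge_subset a b) (support_edge_subset c d)
      (by simp [hac.symm, had.symm, hbc.symm, hbd.symm])

lemma support_edge_sup_edge_subset (a b c d : V) :
    (edge a b ⊔ edge c d).support ⊆ {a, b, c, d} := by
  rw [support_sup]
  exact Set.union_subset ((support_edge_subset a b).trans (by simp [Set.insert_subset_iff]))
    ((support_edge_subset c d).trans (by simp [Set.insert_subset_iff]))

def DegenerateLEOn (G : SimpleGraph V) (d : ℕ) (A : Set V) : Prop :=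
  ∀ S ⊆ A, S.Nonempty → ∃ v ∈ S, (S ∩ G.neighborSet v).ncard ≤ d

lemma degenerateLEOn_univ {G : SimpleGraph V} {d : ℕ} :
    G.DegenerateLEOn d Set.univ ↔ G.DegenerateLE d :=
  ⟨fun h S ↦ h S (Set.subset_univ S), fun h S _ ↦ h S⟩

lemma DegenerateLE.degenerateLEOn {G : SimpleGraph V} {d : ℕ} {A : Set V}
    (h : (G.induce A).DegenerateLE d) : G.DegenerateLEOn d A := by
  intro S hSA ⟨x, hx⟩
  obtain ⟨v, hv, hdeg⟩ := h (Subtype.val ⁻¹' S) ⟨⟨x, hSA hx⟩, hx⟩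
  refine ⟨v, hv, ?_⟩
  rwa [neighborSet_induce, ← Set.preimage_inter,
    Set.ncard_preimage_of_injective_subset_range Subtype.val_injective
      (by simpa using Set.inter_subset_left.trans hSA)] at hdeg

lemma DegenerateLEOn.insert_of_ncard_le {K G : SimpleGraph V} {d : ℕ} {A X : Set V} {v : V}
    (h : K.DegenerateLEOn d A) (hKG : K ≤ G) (hfin : (G.neighborSet v).Finite)
    (hX : X ⊆ G.neighborSet v) (hXA : ∀ x ∈ X, x ∈ A → ¬ K.Adj v x)
    (hdeg : (G.neighborSet v).ncard ≤ d + X.ncard) :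
    K.DegenerateLEOn d (insert v A) := by
  intro S hSA hS
  by_cases hvS : v ∈ S
  · refine ⟨v, hvS, ?_⟩
    have hsub : S ∩ K.neighborSet v ⊆ A ∩ K.neighborSet v := fun x ⟨hxS, hxv⟩ ↦
      ⟨(hSA hxS).resolve_left (K.ne_of_adj hxv).symm, hxv⟩
    have hdisj : Disjoint (A ∩ K.neighborSet v) X :=
      Set.disjoint_left.2 fun x ⟨hxA, hxv⟩ hxX ↦ hXA x hxX hxA hxv
    have hunion : A ∩ K.neighborSet v ∪ X ⊆ G.neighborSet v :=
      Set.union_subset (fun x hx ↦ hKG hx.2) hX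
    have hfinA : (A ∩ K.neighborSet v).Finite := hfin.subset (Set.subset_union_left.trans hunion)
    have hsum : (A ∩ K.neighborSet v).ncard + X.ncard ≤ (G.neighborSet v).ncard := by
      rw [← Set.ncard_union_eq hdisj hfinA (hfin.subset hX)]
      exact Set.ncard_le_ncard hunion hfin
    calc (S ∩ K.neighborSet v).ncard ≤ (A ∩ K.neighborSet v).ncard :=
          Set.ncard_le_ncard hsub hfinA
      _ ≤ d := by omega
  · exact h S (fun x hx ↦ (hSA hx).resolve_left (ne_of_mem_of_not_mem hx hvS)) hS

section Face

variable {K G : SimpleGraph V} {b₁ b₂ b₃ b₄ : V}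

lemma DegenerateLE.degenerateLEOn_sdiff_spanningCoe_sup {d : ℕ} {A : Set V}
    {H : SimpleGraph A} {M : SimpleGraph V} (h : (G.induce A \ H).DegenerateLE d)
    (hM : Disjoint M.support A) : (G \ (H.spanningCoe ⊔ M)).DegenerateLEOn d A := by
  have : (G \ (H.spanningCoe ⊔ M)).induce A = G.induce A \ H := by
    ext u v
    have hu : ∀ w, ¬ M.Adj u w := fun w huw ↦ hM.notMem_of_mem_right u.2 ⟨w, huw⟩
    simp [hu]
  exact (this ▸ h).degenerateLEOn

lemma DegenerateLEOn.degenerateLE_of_face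
    (h : K.DegenerateLEOn 2 ({b₁, b₂, b₃, b₄} : Set V)ᶜ) (hKG : K ≤ G)
    (ne13 : b₁ ≠ b₃) (ne14 : b₁ ≠ b₄) (ne34 : b₃ ≠ b₄)
    (h12 : G.Adj b₁ b₂) (h23 : G.Adj b₂ b₃) (h34 : G.Adj b₃ b₄) (h41 : G.Adj b₄ b₁)
    (hK12 : ¬ K.Adj b₁ b₂) (hK34 : ¬ K.Adj b₃ b₄)
    (hd1 : (G.neighborSet b₁).ncard = 3) (hd3 : (G.neighborSet b₃).ncard = 3)
    (hd2 : (G.neighborSet b₂).ncard = 4) (hd4 : (G.neighborSet b₄).ncard = 4) :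
    K.DegenerateLE 2 := by
  have h4 := h.insert_of_ncard_le (v := b₄) (X := {b₁, b₃}) hKG
    (Set.finite_of_ncard_ne_zero (by omega)) (by simp [Set.insert_subset_iff, h41, h34.symm])
    (by simp) (by rw [Set.ncard_pair ne13, hd4])
  have h2 := h4.insert_of_ncard_le (v := b₂) (X := {b₁, b₃}) hKG
    (Set.finite_of_ncard_ne_zero (by omega)) (by simp [Set.insert_subset_iff, h12.symm, h23])
    (by simp [ne14, ne34]) (by rw [Set.ncard_pair ne13, hd2])
  have h3 := h2.insert_of_ncard_le (v := b₃) (X := {b₄}) hKG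
    (Set.finite_of_ncard_ne_zero (by omega)) (by simp [h34]) (by simp [hK34]) (by simp [hd3])
  have h1 := h3.insert_of_ncard_le (v := b₁) (X := {b₂}) hKG
    (Set.finite_of_ncard_ne_zero (by omega)) (by simp [h12]) (by simp [hK12]) (by simp [hd1])
  have hcover : insert b₁ (insert b₃ (insert b₂ (insert b₄ ({b₁, b₂, b₃, b₄} : Set V)ᶜ))) =
      Set.univ := Set.eq_univ_of_forall fun x ↦ by
    simp only [Set.mem_insert_iff, Set.mem_compl_iff, Set.mem_singleton_iff]
    tauto
  rwa [hcover, degenerateLEOn_univ] at h1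

end Face

end SimpleGraph

theorem statement3_general {V : Type*} (G : SimpleGraph V) (b₁ b₂ b₃ b₄ : V)
    (hne : [b₁, b₂, b₃, b₄].Pairwise (· ≠ ·))
    (h12 : G.Adj b₁ b₂) (h23 : G.Adj b₂ b₃) (h34 : G.Adj b₃ b₄) (h41 : G.Adj b₄ b₁)
    (hd1 : (G.neighborSet b₁).ncard = 3) (hd3 : (G.neighborSet b₃).ncard = 3)
    (hd2 : (G.neighborSet b₂).ncard = 4) (hd4 : (G.neighborSet b₄).ncard = 4)
    (h : (G.induce (({b₁, b₂, b₃, b₄} : Set V)ᶜ)).IsDecomposable 2 1) :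
    G.IsDecomposable 2 1 := by
  simp only [List.pairwise_cons, List.mem_cons, List.not_mem_nil, forall_eq_or_imp,
    List.Pairwise.nil] at hne
  obtain ⟨⟨ne12, ne13, ne14, -⟩, ⟨ne23, ne24, -⟩, ⟨ne34, -⟩, -⟩ := hne
  obtain ⟨H, hHG, hHdeg, hHdgn⟩ := h
  set M := SimpleGraph.edge b₁ b₂ ⊔ SimpleGraph.edge b₃ b₄
  have hMB : Disjoint M.support ({b₁, b₂, b₃, b₄} : Set V)ᶜ :=
    Set.disjoint_compl_right_iff_subset.2 (SimpleGraph.support_edge_sup_edge_subset ..)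
  have hMG : M ≤ G := sup_le ((SimpleGraph.edge_le_iff _).2 (.inr h12))
    ((SimpleGraph.edge_le_iff _).2 (.inr h34))
  refine ⟨H.spanningCoe ⊔ M, sup_le ((SimpleGraph.map_le_iff_le_comap _ _ _).2 hHG) hMG, ?_, ?_⟩
  · exact (SimpleGraph.MaxDegreeLE.spanningCoe (G := H) hHdeg).sup_of_disjoint_support
      (SimpleGraph.maxDegreeLE_edge_sup_edge ne13 ne14 ne23 ne24)
      (Set.disjoint_of_subset_left (by simp [SimpleGraph.support_spanningCoe]) hMB.symm)
  · refine (hHdgn.degenerateLEOn_sdiff_spanningCoe_sup hMB).degenerateLE_of_face sdiff_le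
      ne13 ne14 ne34 h12 h23 h34 h41 ?_ ?_ hd1 hd3 hd2 hd4 <;>
    simp [M, SimpleGraph.edge_adj, ne12, ne34]

/-- Reducibility of a chordless `(3,4,3,4)`-face: if `b₁b₂b₃b₄` is a chordless
`4`-cycle with `deg b₁ = deg b₃ = 3` and `deg b₂ = deg b₄ = 4`, and
`G - {b₁, b₂, b₃, b₄}` is `(2,1)`-decomposable, then `G` is `(2,1)`-decomposable. -/
theorem statement3 {V : Type*} [Fintype V] (G : SimpleGraph V) (b₁ b₂ b₃ b₄ : V)
    (hne : [b₁, b₂, b₃, b₄].Pairwise (· ≠ ·))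
    (h12 : G.Adj b₁ b₂) (h23 : G.Adj b₂ b₃) (h34 : G.Adj b₃ b₄) (h41 : G.Adj b₄ b₁)
    (h13 : ¬ G.Adj b₁ b₃) (h24 : ¬ G.Adj b₂ b₄)
    (hd1 : (G.neighborSet b₁).ncard = 3) (hd3 : (G.neighborSet b₃).ncard = 3)
    (hd2 : (G.neighborSet b₂).ncard = 4) (hd4 : (G.neighborSet b₄).ncard = 4)
    (h : (G.induce (({b₁, b₂, b₃, b₄} : Set V)ᶜ)).IsDecomposable 2 1) :
    G.IsDecomposable 2 1 :=
  statement3_general G b₁ b₂ b₃ b₄ hne h12 h23 h34 h41 hd1 hd3 hd2 hd4 h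
end

section
/- Let G be a finite simple graph containing six distinct vertices v1, v2, v3, v4, v5, w such that the induced subgraph of G on X = {v1, ..., v5, w} has edge set exactly {v1v2, v2v3, v3v4, v4v5, v5v1, v1w, v2w} (a 5-cycle v1v2v3v4v5 together with a vertex w adjacent to v1 and v2), and such that deg_G(v1) = deg_G(v2) = deg_G(v4) = deg_G(w) = 4 and deg_G(v3) = deg_G(v5) = 3. If G − X is (2,1)-decomposable, then G is (2,1)-decomposable. -/
private lemma key_bound {V : Type*} [Finite V] (G H : SimpleGraph V) (S R : Set V) (x : V)
    (hR : R ⊆ G.neighborSet x) (hRe : ∀ r ∈ R, H.Adj x r ∨ r ∉ S) :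
    (S ∩ (G \ H).neighborSet x).ncard ≤ (G.neighborSet x).ncard - R.ncard := by
  have hsub : S ∩ (G \ H).neighborSet x ⊆ G.neighborSet x \ R := by
    rintro b ⟨hbS, hb⟩
    rw [SimpleGraph.mem_neighborSet, SimpleGraph.sdiff_adj] at hb
    refine ⟨hb.1, fun hbR => ?_⟩
    rcases hRe b hbR with h | h
    · exact hb.2 h
    · exact h hbS
  calc (S ∩ (G \ H).neighborSet x).ncard ≤ (G.neighborSet x \ R).ncard :=
        Set.ncard_le_ncard hsub (Set.toFinite _)
    _ = (G.neighborSet x).ncard - R.ncard := Set.ncard_diff hR (Set.toFinite _)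

/-- Reducible configuration of Figure 5(b): `deg v₁ = deg v₂ = deg v₄ = deg w = 4`, `deg v₃ = deg v₅ = 3`.
A 5-cycle `v₁v₂v₃v₄v₅` together with a vertex `w` adjacent to `v₁` and `v₂`,
inducing exactly these seven edges. -/
theorem statement5 {V : Type*} [Fintype V] (G : SimpleGraph V) (v₁ v₂ v₃ v₄ v₅ w : V)
    (hne : [v₁, v₂, v₃, v₄, v₅, w].Pairwise (· ≠ ·))
    (hind : ∀ a ∈ ({v₁, v₂, v₃, v₄, v₅, w} : Set V), ∀ b ∈ ({v₁, v₂, v₃, v₄, v₅, w} : Set V),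
      (G.Adj a b ↔ s(a, b) ∈
        ({s(v₁, v₂), s(v₂, v₃), s(v₃, v₄), s(v₄, v₅), s(v₅, v₁), s(v₁, w), s(v₂, w)} :
          Set (Sym2 V))))
    (hd1 : (G.neighborSet v₁).ncard = 4) (hd2 : (G.neighborSet v₂).ncard = 4)
    (hd3 : (G.neighborSet v₃).ncard = 3) (hd4 : (G.neighborSet v₄).ncard = 4)
    (hd5 : (G.neighborSet v₅).ncard = 3) (hdw : (G.neighborSet w).ncard = 4)
    (h : (G.induce (({v₁, v₂, v₃, v₄, v₅, w} : Set V)ᶜ)).IsDecomposable 2 1) :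
    G.IsDecomposable 2 1 := by
  classical
  simp only [List.pairwise_cons, List.mem_cons, List.not_mem_nil, or_false, List.mem_singleton,
    forall_eq_or_imp, forall_eq, List.Pairwise.nil] at hne
  obtain ⟨⟨n12, n13, n14, n15, n1w⟩, ⟨n23, n24, n25, n2w⟩, ⟨n34, n35, n3w⟩, ⟨n45, n4w⟩, n5w, -⟩ :=
    hne
  have n21 := n12.symm; have n31 := n13.symm; have n41 := n14.symm; have n51 := n15.symm
  have nw1 := n1w.symm; have n32 := n23.symm; have n42 := n24.symm; have n52 := n25.symm
  have nw2 := n2w.symm; have n43 := n34.symm; have n53 := n35.symm; have nw3 := n3w.symm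
  have n54 := n45.symm; have nw4 := n4w.symm; have nw5 := n5w.symm
  set X : Set V := {v₁, v₂, v₃, v₄, v₅, w} with hX
  obtain ⟨H', hle', hdeg', hdegen'⟩ := h
  have a12 : G.Adj v₁ v₂ := (hind v₁ (by simp [hX]) v₂ (by simp [hX])).mpr (by simp)
  have a23 : G.Adj v₂ v₃ := (hind v₂ (by simp [hX]) v₃ (by simp [hX])).mpr (by simp)
  have a34 : G.Adj v₃ v₄ := (hind v₃ (by simp [hX]) v₄ (by simp [hX])).mpr (by simp)
  have a45 : G.Adj v₄ v₅ := (hind v₄ (by simp [hX]) v₅ (by simp [hX])).mpr (by simp)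
  have a51 : G.Adj v₅ v₁ := (hind v₅ (by simp [hX]) v₁ (by simp [hX])).mpr (by simp)
  have a1w : G.Adj v₁ w := (hind v₁ (by simp [hX]) w (by simp [hX])).mpr (by simp)
  have a2w : G.Adj v₂ w := (hind v₂ (by simp [hX]) w (by simp [hX])).mpr (by simp)
  -- the matching inside X
  set M : Set (Sym2 V) := {s(v₂, w), s(v₃, v₄), s(v₅, v₁)} with hM
  set H : SimpleGraph V :=
    (H'.map (Function.Embedding.subtype _)) ⊔ SimpleGraph.fromEdgeSet M with hH
  have hHadj : ∀ a b : V, H.Adj a b ↔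
      ((∃ a' b' : ↥(Xᶜ), H'.Adj a' b' ∧ ↑a' = a ∧ ↑b' = b) ∨ (s(a, b) ∈ M ∧ a ≠ b)) := by
    intro a b
    rw [hH, SimpleGraph.sup_adj, SimpleGraph.map_adj, SimpleGraph.fromEdgeSet_adj]
    simp only [Function.Embedding.coe_subtype]
  -- H contains the matching edges
  have H2w : H.Adj v₂ w := by rw [hHadj]; exact Or.inr ⟨by simp [hM], n2w⟩
  have H34 : H.Adj v₃ v₄ := by rw [hHadj]; exact Or.inr ⟨by simp [hM], n34⟩
  have H51 : H.Adj v₅ v₁ := by rw [hHadj]; exact Or.inr ⟨by simp [hM], n51⟩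
  refine ⟨H, ?_, ?_, ?_⟩
  · -- H ≤ G
    intro a b hab
    rw [hHadj] at hab
    rcases hab with ⟨a', b', hab', rfl, rfl⟩ | ⟨hmem, hab⟩
    · exact hle' hab'
    · simp only [hM, Set.mem_insert_iff, Set.mem_singleton_iff, Sym2.eq_iff] at hmem
      rcases hmem with (⟨rfl, rfl⟩ | ⟨rfl, rfl⟩) | (⟨rfl, rfl⟩ | ⟨rfl, rfl⟩) |
        (⟨rfl, rfl⟩ | ⟨rfl, rfl⟩)
      · exact a2w
      · exact a2w.symm
      · exact a34
      · exact a34.symm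
      · exact a51
      · exact a51.symm
  · -- max degree of H is at most 1
    intro v
    by_cases hv : v ∈ X
    · have hnotc : ∀ a' : ↥(Xᶜ), (↑a' : V) ≠ v := by
        rintro a' rfl; exact a'.2 hv
      have key : ∀ p : V, (∀ b, H.Adj v b → b = p) → (H.neighborSet v).ncard ≤ 1 := by
        intro p hp
        have hsub : H.neighborSet v ⊆ {p} := fun b hb => hp b hb
        calc (H.neighborSet v).ncard ≤ ({p} : Set V).ncard :=
              Set.ncard_le_ncard hsub (Set.toFinite _)
          _ = 1 := Set.ncard_singleton p
      have hadjM : ∀ b, H.Adj v b → s(v, b) ∈ M := by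
        intro b hb
        rw [hHadj] at hb
        rcases hb with ⟨a', b', _, ha', _⟩ | ⟨hmem, _⟩
        · exact absurd ha' (hnotc a')
        · exact hmem
      simp only [hX, Set.mem_insert_iff, Set.mem_singleton_iff] at hv
      rcases hv with rfl | rfl | rfl | rfl | rfl | rfl
      · exact key v₅ fun b hb => by
          simpa [hM, Sym2.eq_iff, n12, n13, n14, n15, n1w] using hadjM b hb
      · exact key w fun b hb => by
          simpa [hM, Sym2.eq_iff, n21, n23, n24, n25, n2w] using hadjM b hb
      · exact key v₄ fun b hb => by
          simpa [hM, Sym2.eq_iff, n31, n32, n34, n35, n3w] using hadjM b hb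
      · exact key v₃ fun b hb => by
          simpa [hM, Sym2.eq_iff, n41, n42, n43, n45, n4w] using hadjM b hb
      · exact key v₁ fun b hb => by
          simpa [hM, Sym2.eq_iff, n51, n52, n53, n54, n5w] using hadjM b hb
      · exact key v₂ fun b hb => by
          simpa [hM, Sym2.eq_iff, nw1, nw2, nw3, nw4, nw5] using hadjM b hb
    · -- v outside X : neighbours come from H'
      have hv' : v ∈ Xᶜ := hv
      have himg : H.neighborSet v = Subtype.val '' (H'.neighborSet ⟨v, hv'⟩) := by
        ext b
        simp only [SimpleGraph.mem_neighborSet, Set.mem_image]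
        constructor
        · intro hb
          rw [hHadj] at hb
          rcases hb with ⟨a', b', h', ha', hb'⟩ | ⟨hmem, _⟩
          · refine ⟨b', ?_, hb'⟩
            have : a' = ⟨v, hv'⟩ := Subtype.ext ha'
            rwa [this] at h'
          · exfalso
            simp only [hM, Set.mem_insert_iff, Set.mem_singleton_iff, Sym2.eq_iff] at hmem
            rcases hmem with (⟨rfl, rfl⟩ | ⟨rfl, rfl⟩) | (⟨rfl, rfl⟩ | ⟨rfl, rfl⟩) |
              (⟨rfl, rfl⟩ | ⟨rfl, rfl⟩) <;>
              exact hv (by simp [hX])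
        · rintro ⟨b', h', rfl⟩
          rw [hHadj]
          exact Or.inl ⟨⟨v, hv'⟩, b', h', rfl, rfl⟩
      rw [himg, Set.ncard_image_of_injective _ Subtype.val_injective]
      exact hdeg' _
  · -- (G \ H) is 2-degenerate
    intro S hS
    have keyb : ∀ x ∈ S, ∀ R : Set V, R ⊆ G.neighborSet x → (∀ r ∈ R, H.Adj x r ∨ r ∉ S) →
        (G.neighborSet x).ncard - R.ncard ≤ 2 → ∃ v ∈ S, (S ∩ (G \ H).neighborSet v).ncard ≤ 2 :=
      fun x hx R hR hRe hle => ⟨x, hx, le_trans (key_bound G H S R x hR hRe) hle⟩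
    by_cases c3 : v₃ ∈ S
    · refine keyb v₃ c3 {v₄} ?_ ?_ ?_
      · intro r hr; rw [Set.mem_singleton_iff] at hr; subst hr; exact a34
      · intro r hr; rw [Set.mem_singleton_iff] at hr; subst hr; exact Or.inl H34
      · rw [hd3, Set.ncard_singleton]
    · by_cases c2 : v₂ ∈ S
      · refine keyb v₂ c2 {w, v₃} ?_ ?_ ?_
        · rintro r (rfl | rfl)
          · exact a2w
          · exact a23
        · rintro r (rfl | rfl)
          · exact Or.inl H2w
          · exact Or.inr c3
        · rw [hd2, Set.ncard_pair nw3]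
      · by_cases c1 : v₁ ∈ S
        · refine keyb v₁ c1 {v₅, v₂} ?_ ?_ ?_
          · rintro r (rfl | rfl)
            · exact a51.symm
            · exact a12
          · rintro r (rfl | rfl)
            · exact Or.inl H51.symm
            · exact Or.inr c2
          · rw [hd1, Set.ncard_pair n52]
        · by_cases cw : w ∈ S
          · refine keyb w cw {v₂, v₁} ?_ ?_ ?_
            · rintro r (rfl | rfl)
              · exact a2w.symm
              · exact a1w.symm
            · rintro r (rfl | rfl)
              · exact Or.inl H2w.symm
              · exact Or.inr c1
            · rw [hdw, Set.ncard_pair n21]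
          · by_cases c5 : v₅ ∈ S
            · refine keyb v₅ c5 {v₁} ?_ ?_ ?_
              · intro r hr; rw [Set.mem_singleton_iff] at hr; subst hr; exact a51
              · intro r hr; rw [Set.mem_singleton_iff] at hr; subst hr; exact Or.inl H51
              · rw [hd5, Set.ncard_singleton]
            · by_cases c4 : v₄ ∈ S
              · refine keyb v₄ c4 {v₃, v₅} ?_ ?_ ?_
                · rintro r (rfl | rfl)
                  · exact a34.symm
                  · exact a45
                · rintro r (rfl | rfl)
                  · exact Or.inl H34.symm
                  · exact Or.inr c5
                · rw [hd4, Set.ncard_pair n35]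
              · -- S avoids X entirely
                have hSsub : S ⊆ Xᶜ := by
                  intro s hs hsX
                  simp only [hX, Set.mem_insert_iff, Set.mem_singleton_iff] at hsX
                  rcases hsX with rfl | rfl | rfl | rfl | rfl | rfl
                  exacts [c1 hs, c2 hs, c3 hs, c4 hs, c5 hs, cw hs]
                set S' : Set ↥(Xᶜ) := {x : ↥(Xᶜ) | ↑x ∈ S} with hS'
                have hS'ne : S'.Nonempty := by
                  obtain ⟨s0, hs0⟩ := hS
                  exact ⟨⟨s0, hSsub hs0⟩, hs0⟩
                obtain ⟨v', hv'S, hv'⟩ := hdegen' S' hS'ne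
                refine ⟨↑v', hv'S, ?_⟩
                have hsub : S ∩ (G \ H).neighborSet ↑v' ⊆
                    Subtype.val '' (S' ∩ ((G.induce Xᶜ) \ H').neighborSet v') := by
                  rintro b ⟨hbS, hb⟩
                  rw [SimpleGraph.mem_neighborSet, SimpleGraph.sdiff_adj] at hb
                  refine ⟨⟨b, hSsub hbS⟩, ⟨hbS, ?_⟩, rfl⟩
                  rw [SimpleGraph.mem_neighborSet, SimpleGraph.sdiff_adj]
                  refine ⟨hb.1, fun hadj => hb.2 ?_⟩
                  rw [hHadj]
                  exact Or.inl ⟨v', ⟨b, hSsub hbS⟩, hadj, rfl, rfl⟩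
                calc (S ∩ (G \ H).neighborSet ↑v').ncard
                    ≤ (Subtype.val '' (S' ∩ ((G.induce Xᶜ) \ H').neighborSet v')).ncard :=
                      Set.ncard_le_ncard hsub (Set.toFinite _)
                  _ = (S' ∩ ((G.induce Xᶜ) \ H').neighborSet v').ncard :=
                      Set.ncard_image_of_injective _ Subtype.val_injective
                  _ ≤ 2 := hv'
end

section
/- Let G be a finite simple graph containing six distinct vertices v1, v2, v3, v4, v5, w such that the induced subgraph of G on X = {v1, ..., v5, w} has edge set exactly {v1v2, v2v3, v3v4, v4v5, v5v1, v1w, v2w} (a 5-cycle v1v2v3v4v5 together with a vertex w adjacent to v1 and v2), and such that deg_G(v1) = deg_G(v3) = deg_G(v5) = deg_G(w) = 4 and deg_G(v2) = deg_G(v4) = 3. If G − X is (2,1)-decomposable, then G is (2,1)-decomposable. -/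
private lemma aux_ncard_two {V : Type*} [Fintype V] {N T : Set V} {a b : V}
    (hab : a ≠ b) (ha : a ∈ N) (hb : b ∈ N) (ha' : a ∉ T) (hb' : b ∉ T)
    (hT : T ⊆ N) (hN : N.ncard ≤ 4) : T.ncard ≤ 2 := by
  have h1 : T ⊆ N \ {a, b} := fun x hx => ⟨hT hx, by rintro (rfl|rfl) <;> tauto⟩
  have hsub : ({a, b} : Set V) ⊆ N := by rintro x (rfl|rfl) <;> assumption
  have h2 : (N \ ({a, b} : Set V)).ncard = N.ncard - 2 := by
    rw [Set.ncard_diff hsub, Set.ncard_pair hab]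
  have h3 := Set.ncard_le_ncard h1 (N \ ({a, b} : Set V)).toFinite
  omega

private lemma aux_ncard_one {V : Type*} [Fintype V] {N T : Set V} {a : V}
    (ha : a ∈ N) (ha' : a ∉ T) (hT : T ⊆ N) (hN : N.ncard ≤ 3) : T.ncard ≤ 2 := by
  have h1 : T ⊆ N \ {a} := fun x hx => ⟨hT hx, by rintro rfl; tauto⟩
  have hsub : ({a} : Set V) ⊆ N := by rintro x rfl; assumption
  have h2 : (N \ ({a} : Set V)).ncard = N.ncard - 1 := by
    rw [Set.ncard_diff hsub, Set.ncard_singleton]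
  have h3 := Set.ncard_le_ncard h1 (N \ ({a} : Set V)).toFinite
  omega


/-- Reducible configuration of Figure 5(c): `deg v₁ = deg v₃ = deg v₅ = deg w = 4`, `deg v₂ = deg v₄ = 3`.
A 5-cycle `v₁v₂v₃v₄v₅` together with a vertex `w` adjacent to `v₁` and `v₂`,
inducing exactly these seven edges. -/
theorem statement6 {V : Type*} [Fintype V] (G : SimpleGraph V) (v₁ v₂ v₃ v₄ v₅ w : V)
    (hne : [v₁, v₂, v₃, v₄, v₅, w].Pairwise (· ≠ ·))
    (hind : ∀ a ∈ ({v₁, v₂, v₃, v₄, v₅, w} : Set V), ∀ b ∈ ({v₁, v₂, v₃, v₄, v₅, w} : Set V),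
      (G.Adj a b ↔ s(a, b) ∈
        ({s(v₁, v₂), s(v₂, v₃), s(v₃, v₄), s(v₄, v₅), s(v₅, v₁), s(v₁, w), s(v₂, w)} :
          Set (Sym2 V))))
    (hd1 : (G.neighborSet v₁).ncard = 4) (hd2 : (G.neighborSet v₂).ncard = 3)
    (hd3 : (G.neighborSet v₃).ncard = 4) (hd4 : (G.neighborSet v₄).ncard = 3)
    (hd5 : (G.neighborSet v₅).ncard = 4) (hdw : (G.neighborSet w).ncard = 4)
    (h : (G.induce (({v₁, v₂, v₃, v₄, v₅, w} : Set V)ᶜ)).IsDecomposable 2 1) :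
    G.IsDecomposable 2 1 := by
  simp only [List.pairwise_cons, List.mem_cons, List.not_mem_nil, or_false,
    List.mem_singleton, forall_eq_or_imp, forall_eq, List.Pairwise.nil, and_true] at hne
  obtain ⟨⟨h12, h13, h14, h15, h1w⟩, ⟨h23, h24, h25, h2w⟩, ⟨h34, h35, h3w⟩, ⟨h45, h4w⟩, h5w⟩ := hne
  set X : Set V := {v₁, v₂, v₃, v₄, v₅, w} with hX
  -- adjacency facts
  have g12 : G.Adj v₁ v₂ := (hind v₁ (by simp [hX]) v₂ (by simp [hX])).mpr (by simp)
  have g23 : G.Adj v₂ v₃ := (hind v₂ (by simp [hX]) v₃ (by simp [hX])).mpr (by simp)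
  have g34 : G.Adj v₃ v₄ := (hind v₃ (by simp [hX]) v₄ (by simp [hX])).mpr (by simp)
  have g45 : G.Adj v₄ v₅ := (hind v₄ (by simp [hX]) v₅ (by simp [hX])).mpr (by simp)
  have g51 : G.Adj v₅ v₁ := (hind v₅ (by simp [hX]) v₁ (by simp [hX])).mpr (by simp)
  have g1w : G.Adj v₁ w := (hind v₁ (by simp [hX]) w (by simp [hX])).mpr (by simp)
  have g2w : G.Adj v₂ w := (hind v₂ (by simp [hX]) w (by simp [hX])).mpr (by simp)
  obtain ⟨H', hH'le, hH'max, hH'deg⟩ := h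
  -- the matching inside X
  set M : SimpleGraph V := SimpleGraph.fromEdgeSet {s(v₂, w), s(v₃, v₄), s(v₁, v₅)} with hM
  set H : SimpleGraph V := M ⊔ H'.map (Function.Embedding.subtype _) with hHdef
  have hMadj : ∀ a b : V, M.Adj a b ↔
      (s(a,b) = s(v₂,w) ∨ s(a,b) = s(v₃,v₄) ∨ s(a,b) = s(v₁,v₅)) ∧ a ≠ b := by
    intro a b; rw [hM, SimpleGraph.fromEdgeSet_adj]; simp [Set.mem_insert_iff]
  -- M endpoints are in X
  have hMX : ∀ a b : V, M.Adj a b → a ∈ X := by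
    intro a b hab
    rw [hMadj] at hab
    rcases hab.1 with h' | h' | h' <;> rw [Sym2.eq_iff] at h' <;>
      rcases h' with ⟨rfl, rfl⟩ | ⟨rfl, rfl⟩ <;> simp [hX]
  have hmapadj : ∀ a b : V, (H'.map (Function.Embedding.subtype _)).Adj a b ↔
      ∃ (ha : a ∈ Xᶜ) (hb : b ∈ Xᶜ), H'.Adj ⟨a, ha⟩ ⟨b, hb⟩ := by
    intro a b
    rw [SimpleGraph.map_adj]
    constructor
    · rintro ⟨⟨a', ha'⟩, ⟨b', hb'⟩, hadj, rfl, rfl⟩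
      exact ⟨ha', hb', hadj⟩
    · rintro ⟨ha, hb, hadj⟩
      exact ⟨⟨a, ha⟩, ⟨b, hb⟩, hadj, rfl, rfl⟩
  have hmapX : ∀ a b : V, (H'.map (Function.Embedding.subtype _)).Adj a b → a ∈ Xᶜ := by
    intro a b hab; rw [hmapadj] at hab; exact hab.1
  have hHle : H ≤ G := by
    rw [hHdef]
    apply sup_le
    · intro a b hab
      rw [hMadj] at hab
      rcases hab.1 with h' | h' | h' <;> rw [Sym2.eq_iff] at h' <;>
        rcases h' with ⟨rfl, rfl⟩ | ⟨rfl, rfl⟩ <;>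
        first
          | exact g2w | exact g2w.symm | exact g34 | exact g34.symm
          | exact g51.symm | exact g51
    · intro a b hab
      rw [hmapadj] at hab
      obtain ⟨ha, hb, hadj⟩ := hab
      exact hH'le hadj
  -- H adjacency facts
  have hH2w : H.Adj v₂ w := by
    rw [hHdef]; left; rw [hMadj]; exact ⟨Or.inl rfl, h2w⟩
  have hH34 : H.Adj v₃ v₄ := by
    rw [hHdef]; left; rw [hMadj]; exact ⟨Or.inr (Or.inl rfl), h34⟩
  have hH15 : H.Adj v₁ v₅ := by
    rw [hHdef]; left; rw [hMadj]; exact ⟨Or.inr (Or.inr rfl), h15⟩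
  refine ⟨H, hHle, ?_, ?_⟩
  · -- max degree ≤ 1
    intro v
    by_cases hv : v ∈ X
    · -- neighbors only from M; and each X vertex has exactly one M-partner
      have hsub : H.neighborSet v ⊆ {b | M.Adj v b} := by
        intro b hb
        rcases hb with hb | hb
        · exact hb
        · exact absurd (hmapX v b hb) (by simpa using hv)
      -- show {b | M.Adj v b} ⊆ singleton, depending on which vertex v is
      have key : ∀ p : V, ({b | M.Adj v b} ⊆ {p}) → (H.neighborSet v).ncard ≤ 1 := by
        intro p hp
        have := Set.ncard_le_ncard (hsub.trans hp) (Set.finite_singleton p)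
        simpa using this
      have hcase : v = v₁ ∨ v = v₂ ∨ v = v₃ ∨ v = v₄ ∨ v = v₅ ∨ v = w := by
        simpa [hX] using hv
      rcases hcase with rfl | rfl | rfl | rfl | rfl | rfl
      · refine key v₅ ?_
        intro b hb
        have hb2 := (hMadj _ b).mp hb
        rcases hb2.1 with h' | h' | h' <;> rw [Sym2.eq_iff] at h' <;>
          rcases h' with ⟨e1, e2⟩ | ⟨e1, e2⟩ <;>
          (first
            | exact e2
            | exact absurd e1 h12 | exact absurd e1 h12.symm
            | exact absurd e1 h13 | exact absurd e1 h13.symm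
            | exact absurd e1 h14 | exact absurd e1 h14.symm
            | exact absurd e1 h15 | exact absurd e1 h15.symm
            | exact absurd e1 h1w | exact absurd e1 h1w.symm
            | exact absurd e1 h23 | exact absurd e1 h23.symm
            | exact absurd e1 h24 | exact absurd e1 h24.symm
            | exact absurd e1 h25 | exact absurd e1 h25.symm
            | exact absurd e1 h2w | exact absurd e1 h2w.symm
            | exact absurd e1 h34 | exact absurd e1 h34.symm
            | exact absurd e1 h35 | exact absurd e1 h35.symm
            | exact absurd e1 h3w | exact absurd e1 h3w.symm
            | exact absurd e1 h45 | exact absurd e1 h45.symm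
            | exact absurd e1 h4w | exact absurd e1 h4w.symm
            | exact absurd e1 h5w.1 | exact absurd e1 h5w.1.symm)
      · refine key w ?_
        intro b hb
        have hb2 := (hMadj _ b).mp hb
        rcases hb2.1 with h' | h' | h' <;> rw [Sym2.eq_iff] at h' <;>
          rcases h' with ⟨e1, e2⟩ | ⟨e1, e2⟩ <;>
          (first
            | exact e2
            | exact absurd e1 h12 | exact absurd e1 h12.symm
            | exact absurd e1 h13 | exact absurd e1 h13.symm
            | exact absurd e1 h14 | exact absurd e1 h14.symm
            | exact absurd e1 h15 | exact absurd e1 h15.symm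
            | exact absurd e1 h1w | exact absurd e1 h1w.symm
            | exact absurd e1 h23 | exact absurd e1 h23.symm
            | exact absurd e1 h24 | exact absurd e1 h24.symm
            | exact absurd e1 h25 | exact absurd e1 h25.symm
            | exact absurd e1 h2w | exact absurd e1 h2w.symm
            | exact absurd e1 h34 | exact absurd e1 h34.symm
            | exact absurd e1 h35 | exact absurd e1 h35.symm
            | exact absurd e1 h3w | exact absurd e1 h3w.symm
            | exact absurd e1 h45 | exact absurd e1 h45.symm
            | exact absurd e1 h4w | exact absurd e1 h4w.symm
            | exact absurd e1 h5w.1 | exact absurd e1 h5w.1.symm)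
      · refine key v₄ ?_
        intro b hb
        have hb2 := (hMadj _ b).mp hb
        rcases hb2.1 with h' | h' | h' <;> rw [Sym2.eq_iff] at h' <;>
          rcases h' with ⟨e1, e2⟩ | ⟨e1, e2⟩ <;>
          (first
            | exact e2
            | exact absurd e1 h12 | exact absurd e1 h12.symm
            | exact absurd e1 h13 | exact absurd e1 h13.symm
            | exact absurd e1 h14 | exact absurd e1 h14.symm
            | exact absurd e1 h15 | exact absurd e1 h15.symm
            | exact absurd e1 h1w | exact absurd e1 h1w.symm
            | exact absurd e1 h23 | exact absurd e1 h23.symm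
            | exact absurd e1 h24 | exact absurd e1 h24.symm
            | exact absurd e1 h25 | exact absurd e1 h25.symm
            | exact absurd e1 h2w | exact absurd e1 h2w.symm
            | exact absurd e1 h34 | exact absurd e1 h34.symm
            | exact absurd e1 h35 | exact absurd e1 h35.symm
            | exact absurd e1 h3w | exact absurd e1 h3w.symm
            | exact absurd e1 h45 | exact absurd e1 h45.symm
            | exact absurd e1 h4w | exact absurd e1 h4w.symm
            | exact absurd e1 h5w.1 | exact absurd e1 h5w.1.symm)
      · refine key v₃ ?_
        intro b hb
        have hb2 := (hMadj _ b).mp hb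
        rcases hb2.1 with h' | h' | h' <;> rw [Sym2.eq_iff] at h' <;>
          rcases h' with ⟨e1, e2⟩ | ⟨e1, e2⟩ <;>
          (first
            | exact e2
            | exact absurd e1 h12 | exact absurd e1 h12.symm
            | exact absurd e1 h13 | exact absurd e1 h13.symm
            | exact absurd e1 h14 | exact absurd e1 h14.symm
            | exact absurd e1 h15 | exact absurd e1 h15.symm
            | exact absurd e1 h1w | exact absurd e1 h1w.symm
            | exact absurd e1 h23 | exact absurd e1 h23.symm
            | exact absurd e1 h24 | exact absurd e1 h24.symm
            | exact absurd e1 h25 | exact absurd e1 h25.symm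
            | exact absurd e1 h2w | exact absurd e1 h2w.symm
            | exact absurd e1 h34 | exact absurd e1 h34.symm
            | exact absurd e1 h35 | exact absurd e1 h35.symm
            | exact absurd e1 h3w | exact absurd e1 h3w.symm
            | exact absurd e1 h45 | exact absurd e1 h45.symm
            | exact absurd e1 h4w | exact absurd e1 h4w.symm
            | exact absurd e1 h5w.1 | exact absurd e1 h5w.1.symm)
      · refine key v₁ ?_
        intro b hb
        have hb2 := (hMadj _ b).mp hb
        rcases hb2.1 with h' | h' | h' <;> rw [Sym2.eq_iff] at h' <;>
          rcases h' with ⟨e1, e2⟩ | ⟨e1, e2⟩ <;>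
          (first
            | exact e2
            | exact absurd e1 h12 | exact absurd e1 h12.symm
            | exact absurd e1 h13 | exact absurd e1 h13.symm
            | exact absurd e1 h14 | exact absurd e1 h14.symm
            | exact absurd e1 h15 | exact absurd e1 h15.symm
            | exact absurd e1 h1w | exact absurd e1 h1w.symm
            | exact absurd e1 h23 | exact absurd e1 h23.symm
            | exact absurd e1 h24 | exact absurd e1 h24.symm
            | exact absurd e1 h25 | exact absurd e1 h25.symm
            | exact absurd e1 h2w | exact absurd e1 h2w.symm
            | exact absurd e1 h34 | exact absurd e1 h34.symm
            | exact absurd e1 h35 | exact absurd e1 h35.symm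
            | exact absurd e1 h3w | exact absurd e1 h3w.symm
            | exact absurd e1 h45 | exact absurd e1 h45.symm
            | exact absurd e1 h4w | exact absurd e1 h4w.symm
            | exact absurd e1 h5w.1 | exact absurd e1 h5w.1.symm)
      · refine key v₂ ?_
        intro b hb
        have hb2 := (hMadj _ b).mp hb
        rcases hb2.1 with h' | h' | h' <;> rw [Sym2.eq_iff] at h' <;>
          rcases h' with ⟨e1, e2⟩ | ⟨e1, e2⟩ <;>
          (first
            | exact e2
            | exact absurd e1 h12 | exact absurd e1 h12.symm
            | exact absurd e1 h13 | exact absurd e1 h13.symm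
            | exact absurd e1 h14 | exact absurd e1 h14.symm
            | exact absurd e1 h15 | exact absurd e1 h15.symm
            | exact absurd e1 h1w | exact absurd e1 h1w.symm
            | exact absurd e1 h23 | exact absurd e1 h23.symm
            | exact absurd e1 h24 | exact absurd e1 h24.symm
            | exact absurd e1 h25 | exact absurd e1 h25.symm
            | exact absurd e1 h2w | exact absurd e1 h2w.symm
            | exact absurd e1 h34 | exact absurd e1 h34.symm
            | exact absurd e1 h35 | exact absurd e1 h35.symm
            | exact absurd e1 h3w | exact absurd e1 h3w.symm
            | exact absurd e1 h45 | exact absurd e1 h45.symm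
            | exact absurd e1 h4w | exact absurd e1 h4w.symm
            | exact absurd e1 h5w.1 | exact absurd e1 h5w.1.symm)
    · -- v outside X : neighbors come from the map of H'
      have hsub : H.neighborSet v ⊆ Subtype.val '' (H'.neighborSet ⟨v, by simpa using hv⟩) := by
        intro b hb
        rcases hb with hb | hb
        · exact absurd (hMX v b hb) hv
        · rw [hmapadj] at hb
          obtain ⟨ha, hb', hadj⟩ := hb
          exact ⟨⟨b, hb'⟩, hadj, rfl⟩
      have h1 := Set.ncard_le_ncard hsub (Set.toFinite _)
      rw [Set.ncard_image_of_injective _ Subtype.val_injective] at h1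
      exact h1.trans (hH'max _)
  · -- degeneracy
    intro S hS
    have hGH : ∀ a b : V, (G \ H).Adj a b ↔ G.Adj a b ∧ ¬ H.Adj a b := fun a b =>
      SimpleGraph.sdiff_adj G H a b
    have hTsub : ∀ x : V, S ∩ (G \ H).neighborSet x ⊆ G.neighborSet x := by
      intro x b hb
      exact ((hGH x b).mp hb.2).1
    by_cases hs2 : v₂ ∈ S
    · refine ⟨v₂, hs2, ?_⟩
      refine aux_ncard_one (a := w) g2w ?_ (hTsub v₂) hd2.le
      rintro ⟨-, hw⟩
      exact ((hGH v₂ w).mp hw).2 hH2w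
    · by_cases hs4 : v₄ ∈ S
      · refine ⟨v₄, hs4, ?_⟩
        refine aux_ncard_one (a := v₃) g34.symm ?_ (hTsub v₄) hd4.le
        rintro ⟨-, hw⟩
        exact ((hGH v₄ v₃).mp hw).2 hH34.symm
      · by_cases hs1 : v₁ ∈ S
        · refine ⟨v₁, hs1, ?_⟩
          refine aux_ncard_two (a := v₅) (b := v₂) (Ne.symm h25) g51.symm g12 ?_ ?_
            (hTsub v₁) hd1.le
          · rintro ⟨-, hw⟩
            exact ((hGH v₁ v₅).mp hw).2 hH15
          · rintro ⟨hmem, -⟩; exact hs2 hmem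
        · by_cases hs3 : v₃ ∈ S
          · refine ⟨v₃, hs3, ?_⟩
            refine aux_ncard_two (a := v₄) (b := v₂) (Ne.symm h24) g34 g23.symm ?_ ?_
              (hTsub v₃) hd3.le
            · rintro ⟨-, hw⟩
              exact ((hGH v₃ v₄).mp hw).2 hH34
            · rintro ⟨hmem, -⟩; exact hs2 hmem
          · by_cases hs5 : v₅ ∈ S
            · refine ⟨v₅, hs5, ?_⟩
              refine aux_ncard_two (a := v₁) (b := v₄) h14 g51 g45.symm ?_ ?_
                (hTsub v₅) hd5.le
              · rintro ⟨-, hw⟩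
                exact ((hGH v₅ v₁).mp hw).2 hH15.symm
              · rintro ⟨hmem, -⟩; exact hs4 hmem
            · by_cases hsw : w ∈ S
              · refine ⟨w, hsw, ?_⟩
                refine aux_ncard_two (a := v₂) (b := v₁) (Ne.symm h12) g2w.symm g1w.symm ?_ ?_
                  (hTsub w) hdw.le
                · rintro ⟨hmem, -⟩; exact hs2 hmem
                · rintro ⟨hmem, -⟩; exact hs1 hmem
              · -- S avoids X entirely
                have hSX : S ⊆ Xᶜ := by
                  intro x hx
                  simp only [hX, Set.mem_compl_iff, Set.mem_insert_iff, Set.mem_singleton_iff]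
                  rintro (rfl | rfl | rfl | rfl | rfl | rfl) <;> tauto
                set S' : Set ↥(Xᶜ) := Subtype.val ⁻¹' S with hS'
                obtain ⟨x, hx⟩ := hS
                have hS'ne : S'.Nonempty := ⟨⟨x, hSX hx⟩, hx⟩
                obtain ⟨u, huS, hucard⟩ := hH'deg S' hS'ne
                refine ⟨↑u, huS, ?_⟩
                have himg : S ∩ (G \ H).neighborSet ↑u =
                    Subtype.val '' (S' ∩ (G.induce Xᶜ \ H').neighborSet u) := by
                  ext b
                  constructor
                  · rintro ⟨hbS, hbadj⟩
                    obtain ⟨hGadj, hHadj⟩ := (hGH _ _).mp hbadj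
                    refine ⟨⟨b, hSX hbS⟩, ⟨hbS, ?_⟩, rfl⟩
                    show (G.induce Xᶜ \ H').Adj u ⟨b, hSX hbS⟩
                    rw [SimpleGraph.sdiff_adj]
                    refine ⟨hGadj, fun hc => hHadj ?_⟩
                    rw [hHdef]; right
                    rw [hmapadj]
                    exact ⟨u.2, hSX hbS, hc⟩
                  · rintro ⟨⟨b', hb'⟩, ⟨hbS, hbadj⟩, rfl⟩
                    have hbadj2 : (G.induce Xᶜ \ H').Adj u ⟨b', hb'⟩ := hbadj
                    rw [SimpleGraph.sdiff_adj] at hbadj2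
                    refine ⟨hbS, (hGH _ _).mpr ⟨hbadj2.1, fun hc => ?_⟩⟩
                    rcases hc with hc | hc
                    · exact u.2 (hMX _ _ hc)
                    · rw [hmapadj] at hc
                      obtain ⟨ha, hb2, hadj⟩ := hc
                      exact hbadj2.2 (by convert hadj <;> simp)
                rw [himg, Set.ncard_image_of_injective _ Subtype.val_injective]
                exact hucard
end

section
/- Let G be a finite simple graph containing nine distinct vertices v0, h, l1, l2, l3, r1, r2, r3, b such that the induced subgraph of G on X = {v0, h, l1, l2, l3, r1, r2, r3, b} has edge set exactly the union of the 4-cycle v0 l3 b r3, the 5-cycle v0 h l1 l2 l3, and the 5-cycle v0 h r1 r2 r3 (that is, exactly the 11 edges v0l3, l3b, br3, r3v0, v0h, hl1, l1l2, l2l3, hr1, r1r2, r2r3), and such that deg_G(v0) = deg_G(l2) = deg_G(r2) = 3 and deg_G(h) = deg_G(l1) = deg_G(l3) = deg_G(r1) = deg_G(r3) = deg_G(b) = 4. If G − X is (2,1)-decomposable, then G is (2,1)-decomposable. -/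
private lemma auxdeg2 {V : Type*} [Fintype V] (G H : SimpleGraph V) (S : Set V)
    (w m e : V) (hm : m ∈ G.neighborSet w) (he : e ∈ G.neighborSet w) (hme : m ≠ e)
    (hexm : H.Adj w m ∨ m ∉ S) (hexe : H.Adj w e ∨ e ∉ S)
    (hcard : (G.neighborSet w).ncard ≤ 4) :
    (S ∩ (G \ H).neighborSet w).ncard ≤ 2 := by
  have hsub : S ∩ (G \ H).neighborSet w ⊆ G.neighborSet w \ {m, e} := by
    rintro u ⟨huS, hadj⟩
    rw [SimpleGraph.mem_neighborSet, SimpleGraph.sdiff_adj] at hadj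
    refine ⟨hadj.1, ?_⟩
    simp only [Set.mem_insert_iff, Set.mem_singleton_iff]
    rintro (rfl | rfl)
    · rcases hexm with h' | h'
      · exact hadj.2 h'
      · exact h' huS
    · rcases hexe with h' | h'
      · exact hadj.2 h'
      · exact h' huS
  have h1 : ({m, e} : Set V) ⊆ G.neighborSet w := by
    intro x hx
    simp only [Set.mem_insert_iff, Set.mem_singleton_iff] at hx
    rcases hx with rfl | rfl
    exacts [hm, he]
  calc (S ∩ (G \ H).neighborSet w).ncard
      ≤ (G.neighborSet w \ {m, e}).ncard := Set.ncard_le_ncard hsub (Set.toFinite _)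
    _ = (G.neighborSet w).ncard - ({m, e} : Set V).ncard :=
        Set.ncard_diff h1 (Set.toFinite _)
    _ ≤ 2 := by rw [Set.ncard_pair hme]; omega

private lemma auxdeg1 {V : Type*} [Fintype V] (G H : SimpleGraph V) (S : Set V)
    (w m : V) (hm : m ∈ G.neighborSet w)
    (hexm : H.Adj w m ∨ m ∉ S)
    (hcard : (G.neighborSet w).ncard ≤ 3) :
    (S ∩ (G \ H).neighborSet w).ncard ≤ 2 := by
  have hsub : S ∩ (G \ H).neighborSet w ⊆ G.neighborSet w \ {m} := by
    rintro u ⟨huS, hadj⟩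
    rw [SimpleGraph.mem_neighborSet, SimpleGraph.sdiff_adj] at hadj
    refine ⟨hadj.1, ?_⟩
    simp only [Set.mem_singleton_iff]
    rintro rfl
    rcases hexm with h' | h'
    · exact hadj.2 h'
    · exact h' huS
  have h1 : ({m} : Set V) ⊆ G.neighborSet w := by
    intro x hx
    simp only [Set.mem_singleton_iff] at hx
    subst hx; exact hm
  calc (S ∩ (G \ H).neighborSet w).ncard
      ≤ (G.neighborSet w \ {m}).ncard := Set.ncard_le_ncard hsub (Set.toFinite _)
    _ = (G.neighborSet w).ncard - ({m} : Set V).ncard :=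
        Set.ncard_diff h1 (Set.toFinite _)
    _ ≤ 2 := by rw [Set.ncard_singleton]; omega


/-- Reducible 'light 3-vertex' configuration of Figure 4(b): a 4-cycle
`v₀ l₃ b r₃` together with the 5-cycles `v₀ h l₁ l₂ l₃` and `v₀ h r₁ r₂ r₃`,
inducing exactly these eleven edges. -/
theorem statement8 {V : Type*} [Fintype V] (G : SimpleGraph V)
    (v₀ h l₁ l₂ l₃ r₁ r₂ r₃ b : V)
    (hne : [v₀, h, l₁, l₂, l₃, r₁, r₂, r₃, b].Pairwise (· ≠ ·))
    (hind : ∀ x ∈ ({v₀, h, l₁, l₂, l₃, r₁, r₂, r₃, b} : Set V),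
      ∀ y ∈ ({v₀, h, l₁, l₂, l₃, r₁, r₂, r₃, b} : Set V),
      (G.Adj x y ↔ s(x, y) ∈
        ({s(v₀, l₃), s(l₃, b), s(b, r₃), s(r₃, v₀), s(v₀, h), s(h, l₁), s(l₁, l₂),
          s(l₂, l₃), s(h, r₁), s(r₁, r₂), s(r₂, r₃)} : Set (Sym2 V))))
    (hdv₀ : (G.neighborSet v₀).ncard = 3) (hdh : (G.neighborSet h).ncard = 4)
    (hdl₁ : (G.neighborSet l₁).ncard = 4) (hdl₂ : (G.neighborSet l₂).ncard = 3)
    (hdl₃ : (G.neighborSet l₃).ncard = 4)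
    (hdr₁ : (G.neighborSet r₁).ncard = 4) (hdr₂ : (G.neighborSet r₂).ncard = 3)
    (hdr₃ : (G.neighborSet r₃).ncard = 4) (hdb : (G.neighborSet b).ncard = 4)
    (hdec : (G.induce (({v₀, h, l₁, l₂, l₃, r₁, r₂, r₃, b} : Set V)ᶜ)).IsDecomposable 2 1) :
    G.IsDecomposable 2 1 := by
  classical
  simp only [List.pairwise_cons, List.mem_cons, List.not_mem_nil, or_false,
    List.mem_singleton, and_true, ne_eq, forall_eq_or_imp, forall_eq] at hne
  obtain ⟨⟨n01, n02, n03, n04, n05, n06, n07, n08⟩, ⟨n12, n13, n14, n15, n16, n17, n18⟩,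
    ⟨n23, n24, n25, n26, n27, n28⟩, ⟨n34, n35, n36, n37, n38⟩, ⟨n45, n46, n47, n48⟩,
    ⟨n56, n57, n58⟩, ⟨n67, n68⟩, n78, -, -⟩ := hne
  -- the eleven adjacencies
  have a1 : G.Adj v₀ l₃ := (hind v₀ (by simp) l₃ (by simp)).2 (by simp)
  have a2 : G.Adj l₃ b := (hind l₃ (by simp) b (by simp)).2 (by simp)
  have a3 : G.Adj b r₃ := (hind b (by simp) r₃ (by simp)).2 (by simp)
  have a4 : G.Adj r₃ v₀ := (hind r₃ (by simp) v₀ (by simp)).2 (by simp)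
  have a5 : G.Adj v₀ h := (hind v₀ (by simp) h (by simp)).2 (by simp)
  have a6 : G.Adj h l₁ := (hind h (by simp) l₁ (by simp)).2 (by simp)
  have a7 : G.Adj l₁ l₂ := (hind l₁ (by simp) l₂ (by simp)).2 (by simp)
  have a8 : G.Adj l₂ l₃ := (hind l₂ (by simp) l₃ (by simp)).2 (by simp)
  have a9 : G.Adj h r₁ := (hind h (by simp) r₁ (by simp)).2 (by simp)
  have a10 : G.Adj r₁ r₂ := (hind r₁ (by simp) r₂ (by simp)).2 (by simp)
  have a11 : G.Adj r₂ r₃ := (hind r₂ (by simp) r₃ (by simp)).2 (by simp)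
  set X : Set V := {v₀, h, l₁, l₂, l₃, r₁, r₂, r₃, b} with hXdef
  obtain ⟨H', hH'le, hH'deg, hH'dec⟩ := hdec
  set f : ↥(Xᶜ) ↪ V := Function.Embedding.subtype _ with hfdef
  set M : SimpleGraph V :=
    SimpleGraph.fromEdgeSet {s(v₀, r₃), s(h, l₁), s(l₃, b), s(r₁, r₂)} with hMdef
  set H : SimpleGraph V := H'.map f ⊔ M with hHdef
  -- matching adjacencies in H
  have HM1 : H.Adj v₀ r₃ := (SimpleGraph.sup_adj _ _ _ _).mpr
    (Or.inr ((SimpleGraph.fromEdgeSet_adj _).mpr ⟨by simp, n07⟩))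
  have HM2 : H.Adj h l₁ := (SimpleGraph.sup_adj _ _ _ _).mpr
    (Or.inr ((SimpleGraph.fromEdgeSet_adj _).mpr ⟨by simp, n12⟩))
  have HM3 : H.Adj l₃ b := (SimpleGraph.sup_adj _ _ _ _).mpr
    (Or.inr ((SimpleGraph.fromEdgeSet_adj _).mpr ⟨by simp, n48⟩))
  have HM4 : H.Adj r₁ r₂ := (SimpleGraph.sup_adj _ _ _ _).mpr
    (Or.inr ((SimpleGraph.fromEdgeSet_adj _).mpr ⟨by simp, n56⟩))
  -- no map-edges touch X
  have hmapX : ∀ x u : V, x ∈ X → ¬ (H'.map f).Adj x u := by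
    intro x u hx hadj
    rw [SimpleGraph.map_adj] at hadj
    obtain ⟨a', c', -, rfl, -⟩ := hadj
    exact a'.2 hx
  refine ⟨H, ?_, ?_, ?_⟩
  · -- H ≤ G
    refine sup_le ?_ ?_
    · intro x y hxy
      rw [SimpleGraph.map_adj] at hxy
      obtain ⟨a', c', hadj, rfl, rfl⟩ := hxy
      exact hH'le hadj
    · intro x y hxy
      obtain ⟨hmem, -⟩ := (SimpleGraph.fromEdgeSet_adj _).mp hxy
      simp only [Set.mem_insert_iff, Set.mem_singleton_iff, Sym2.eq, Sym2.rel_iff',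
        Prod.mk.injEq, Prod.swap_prod_mk] at hmem
      rcases hmem with (⟨rfl, rfl⟩ | ⟨rfl, rfl⟩) | (⟨rfl, rfl⟩ | ⟨rfl, rfl⟩) |
        (⟨rfl, rfl⟩ | ⟨rfl, rfl⟩) | (⟨rfl, rfl⟩ | ⟨rfl, rfl⟩)
      exacts [a4.symm, a4, a6, a6.symm, a2, a2.symm, a10, a10.symm]
  · -- max degree ≤ 1
    intro v
    by_cases hv : v ∈ X
    · have hMnbr : ∀ p : V, (∀ u : V, M.Adj v u → u = p) → (H.neighborSet v).ncard ≤ 1 := by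
        intro p hp
        have hsub : H.neighborSet v ⊆ {p} := by
          intro u hu
          rcases (SimpleGraph.sup_adj _ _ _ _).mp hu with hu | hu
          · exact absurd hu (hmapX v u hv)
          · exact hp u hu
        calc (H.neighborSet v).ncard ≤ ({p} : Set V).ncard :=
              Set.ncard_le_ncard hsub (Set.toFinite _)
          _ = 1 := Set.ncard_singleton p
      have n01' := Ne.symm n01; have n02' := Ne.symm n02; have n03' := Ne.symm n03
      have n04' := Ne.symm n04; have n05' := Ne.symm n05; have n06' := Ne.symm n06
      have n07' := Ne.symm n07; have n08' := Ne.symm n08; have n12' := Ne.symm n12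
      have n13' := Ne.symm n13; have n14' := Ne.symm n14; have n15' := Ne.symm n15
      have n16' := Ne.symm n16; have n17' := Ne.symm n17; have n18' := Ne.symm n18
      have n23' := Ne.symm n23; have n24' := Ne.symm n24; have n25' := Ne.symm n25
      have n26' := Ne.symm n26; have n27' := Ne.symm n27; have n28' := Ne.symm n28
      have n34' := Ne.symm n34; have n35' := Ne.symm n35; have n36' := Ne.symm n36
      have n37' := Ne.symm n37; have n38' := Ne.symm n38; have n45' := Ne.symm n45
      have n46' := Ne.symm n46; have n47' := Ne.symm n47; have n48' := Ne.symm n48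
      have n56' := Ne.symm n56; have n57' := Ne.symm n57; have n58' := Ne.symm n58
      have n67' := Ne.symm n67; have n68' := Ne.symm n68; have n78' := Ne.symm n78
      simp only [hXdef, Set.mem_insert_iff, Set.mem_singleton_iff] at hv
      rcases hv with rfl | rfl | rfl | rfl | rfl | rfl | rfl | rfl | rfl
      · refine hMnbr r₃ ?_
        intro u hu
        obtain ⟨hmem, -⟩ := (SimpleGraph.fromEdgeSet_adj _).mp hu
        simp only [Set.mem_insert_iff, Set.mem_singleton_iff, Sym2.eq, Sym2.rel_iff',
          Prod.mk.injEq, Prod.swap_prod_mk] at hmem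
        rcases hmem with (⟨-, h'⟩ | ⟨hc, -⟩) | (⟨hc, -⟩ | ⟨hc, -⟩) | (⟨hc, -⟩ | ⟨hc, -⟩) | (⟨hc, -⟩ | ⟨hc, -⟩)
        exacts [h', absurd hc n07, absurd hc n01, absurd hc n02, absurd hc n04, absurd hc n08, absurd hc n05, absurd hc n06]
      · refine hMnbr l₁ ?_
        intro u hu
        obtain ⟨hmem, -⟩ := (SimpleGraph.fromEdgeSet_adj _).mp hu
        simp only [Set.mem_insert_iff, Set.mem_singleton_iff, Sym2.eq, Sym2.rel_iff',
          Prod.mk.injEq, Prod.swap_prod_mk] at hmem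
        rcases hmem with (⟨hc, -⟩ | ⟨hc, -⟩) | (⟨-, h'⟩ | ⟨hc, -⟩) | (⟨hc, -⟩ | ⟨hc, -⟩) | (⟨hc, -⟩ | ⟨hc, -⟩)
        exacts [absurd hc n01', absurd hc n17, h', absurd hc n12, absurd hc n14, absurd hc n18, absurd hc n15, absurd hc n16]
      · refine hMnbr h ?_
        intro u hu
        obtain ⟨hmem, -⟩ := (SimpleGraph.fromEdgeSet_adj _).mp hu
        simp only [Set.mem_insert_iff, Set.mem_singleton_iff, Sym2.eq, Sym2.rel_iff',
          Prod.mk.injEq, Prod.swap_prod_mk] at hmem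
        rcases hmem with (⟨hc, -⟩ | ⟨hc, -⟩) | (⟨hc, -⟩ | ⟨-, h'⟩) | (⟨hc, -⟩ | ⟨hc, -⟩) | (⟨hc, -⟩ | ⟨hc, -⟩)
        exacts [absurd hc n02', absurd hc n27, absurd hc n12', h', absurd hc n24, absurd hc n28, absurd hc n25, absurd hc n26]
      · refine hMnbr v₀ ?_
        intro u hu
        obtain ⟨hmem, -⟩ := (SimpleGraph.fromEdgeSet_adj _).mp hu
        simp only [Set.mem_insert_iff, Set.mem_singleton_iff, Sym2.eq, Sym2.rel_iff',
          Prod.mk.injEq, Prod.swap_prod_mk] at hmem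
        rcases hmem with (⟨hc, -⟩ | ⟨hc, -⟩) | (⟨hc, -⟩ | ⟨hc, -⟩) | (⟨hc, -⟩ | ⟨hc, -⟩) | (⟨hc, -⟩ | ⟨hc, -⟩)
        exacts [absurd hc n03', absurd hc n37, absurd hc n13', absurd hc n23', absurd hc n34, absurd hc n38, absurd hc n35, absurd hc n36]
      · refine hMnbr b ?_
        intro u hu
        obtain ⟨hmem, -⟩ := (SimpleGraph.fromEdgeSet_adj _).mp hu
        simp only [Set.mem_insert_iff, Set.mem_singleton_iff, Sym2.eq, Sym2.rel_iff',
          Prod.mk.injEq, Prod.swap_prod_mk] at hmem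
        rcases hmem with (⟨hc, -⟩ | ⟨hc, -⟩) | (⟨hc, -⟩ | ⟨hc, -⟩) | (⟨-, h'⟩ | ⟨hc, -⟩) | (⟨hc, -⟩ | ⟨hc, -⟩)
        exacts [absurd hc n04', absurd hc n47, absurd hc n14', absurd hc n24', h', absurd hc n48, absurd hc n45, absurd hc n46]
      · refine hMnbr r₂ ?_
        intro u hu
        obtain ⟨hmem, -⟩ := (SimpleGraph.fromEdgeSet_adj _).mp hu
        simp only [Set.mem_insert_iff, Set.mem_singleton_iff, Sym2.eq, Sym2.rel_iff',
          Prod.mk.injEq, Prod.swap_prod_mk] at hmem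
        rcases hmem with (⟨hc, -⟩ | ⟨hc, -⟩) | (⟨hc, -⟩ | ⟨hc, -⟩) | (⟨hc, -⟩ | ⟨hc, -⟩) | (⟨-, h'⟩ | ⟨hc, -⟩)
        exacts [absurd hc n05', absurd hc n57, absurd hc n15', absurd hc n25', absurd hc n45', absurd hc n58, h', absurd hc n56]
      · refine hMnbr r₁ ?_
        intro u hu
        obtain ⟨hmem, -⟩ := (SimpleGraph.fromEdgeSet_adj _).mp hu
        simp only [Set.mem_insert_iff, Set.mem_singleton_iff, Sym2.eq, Sym2.rel_iff',
          Prod.mk.injEq, Prod.swap_prod_mk] at hmem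
        rcases hmem with (⟨hc, -⟩ | ⟨hc, -⟩) | (⟨hc, -⟩ | ⟨hc, -⟩) | (⟨hc, -⟩ | ⟨hc, -⟩) | (⟨hc, -⟩ | ⟨-, h'⟩)
        exacts [absurd hc n06', absurd hc n67, absurd hc n16', absurd hc n26', absurd hc n46', absurd hc n68, absurd hc n56', h']
      · refine hMnbr v₀ ?_
        intro u hu
        obtain ⟨hmem, -⟩ := (SimpleGraph.fromEdgeSet_adj _).mp hu
        simp only [Set.mem_insert_iff, Set.mem_singleton_iff, Sym2.eq, Sym2.rel_iff',
          Prod.mk.injEq, Prod.swap_prod_mk] at hmem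
        rcases hmem with (⟨hc, -⟩ | ⟨-, h'⟩) | (⟨hc, -⟩ | ⟨hc, -⟩) | (⟨hc, -⟩ | ⟨hc, -⟩) | (⟨hc, -⟩ | ⟨hc, -⟩)
        exacts [absurd hc n07', h', absurd hc n17', absurd hc n27', absurd hc n47', absurd hc n78, absurd hc n57', absurd hc n67']
      · refine hMnbr l₃ ?_
        intro u hu
        obtain ⟨hmem, -⟩ := (SimpleGraph.fromEdgeSet_adj _).mp hu
        simp only [Set.mem_insert_iff, Set.mem_singleton_iff, Sym2.eq, Sym2.rel_iff',
          Prod.mk.injEq, Prod.swap_prod_mk] at hmem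
        rcases hmem with (⟨hc, -⟩ | ⟨hc, -⟩) | (⟨hc, -⟩ | ⟨hc, -⟩) | (⟨hc, -⟩ | ⟨-, h'⟩) | (⟨hc, -⟩ | ⟨hc, -⟩)
        exacts [absurd hc n08', absurd hc n78', absurd hc n18', absurd hc n28', absurd hc n48', h', absurd hc n58', absurd hc n68']
    · have hvc : v ∈ Xᶜ := hv
      have hsub : H.neighborSet v ⊆ Subtype.val '' (H'.neighborSet ⟨v, hvc⟩) := by
        intro u hu
        rcases (SimpleGraph.sup_adj _ _ _ _).mp hu with hu | hu
        · rw [SimpleGraph.map_adj] at hu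
          obtain ⟨a', c', hadj, ha, rfl⟩ := hu
          have hav : a' = ⟨v, hvc⟩ := Subtype.ext ha
          subst hav
          exact ⟨c', hadj, rfl⟩
        · exfalso
          obtain ⟨hmem, -⟩ := (SimpleGraph.fromEdgeSet_adj _).mp hu
          simp only [Set.mem_insert_iff, Set.mem_singleton_iff, Sym2.eq, Sym2.rel_iff',
            Prod.mk.injEq, Prod.swap_prod_mk] at hmem
          rcases hmem with (⟨rfl, -⟩ | ⟨rfl, -⟩) | (⟨rfl, -⟩ | ⟨rfl, -⟩) |
            (⟨rfl, -⟩ | ⟨rfl, -⟩) | (⟨rfl, -⟩ | ⟨rfl, -⟩)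
          all_goals exact hv (by simp [hXdef])
      calc (H.neighborSet v).ncard ≤ (Subtype.val '' (H'.neighborSet ⟨v, hvc⟩)).ncard :=
            Set.ncard_le_ncard hsub (Set.toFinite _)
        _ = (H'.neighborSet ⟨v, hvc⟩).ncard :=
            Set.ncard_image_of_injective _ Subtype.val_injective
        _ ≤ 1 := hH'deg _
  · -- degeneracy
    intro S hS
    by_cases c0 : v₀ ∈ S
    · exact ⟨v₀, c0, auxdeg1 G H S v₀ r₃ a4.symm (Or.inl HM1) (by rw [hdv₀])⟩
    by_cases ch : h ∈ S
    · exact ⟨h, ch, auxdeg2 G H S h l₁ v₀ a6 a5.symm (Ne.symm n02)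
        (Or.inl HM2) (Or.inr c0) (by rw [hdh])⟩
    by_cases cr1 : r₁ ∈ S
    · exact ⟨r₁, cr1, auxdeg2 G H S r₁ r₂ h a10 a9.symm (Ne.symm n16)
        (Or.inl HM4) (Or.inr ch) (by rw [hdr₁])⟩
    by_cases cr2 : r₂ ∈ S
    · exact ⟨r₂, cr2, auxdeg1 G H S r₂ r₁ a10.symm (Or.inl HM4.symm) (by rw [hdr₂])⟩
    by_cases cr3 : r₃ ∈ S
    · exact ⟨r₃, cr3, auxdeg2 G H S r₃ v₀ r₂ a4 a11.symm n06
        (Or.inl HM1.symm) (Or.inr cr2) (by rw [hdr₃])⟩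
    by_cases cb : b ∈ S
    · exact ⟨b, cb, auxdeg2 G H S b l₃ r₃ a2.symm a3 n47
        (Or.inl HM3.symm) (Or.inr cr3) (by rw [hdb])⟩
    by_cases cl3 : l₃ ∈ S
    · exact ⟨l₃, cl3, auxdeg2 G H S l₃ b v₀ a2 a1.symm (Ne.symm n08)
        (Or.inl HM3) (Or.inr c0) (by rw [hdl₃])⟩
    by_cases cl2 : l₂ ∈ S
    · exact ⟨l₂, cl2, auxdeg1 G H S l₂ l₃ a8 (Or.inr cl3) (by rw [hdl₂])⟩
    by_cases cl1 : l₁ ∈ S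
    · exact ⟨l₁, cl1, auxdeg2 G H S l₁ h l₂ a6.symm a7 n13
        (Or.inl HM2.symm) (Or.inr cl2) (by rw [hdl₁])⟩
    -- S avoids X
    have hSX : S ⊆ Xᶜ := by
      intro u hu huX
      simp only [hXdef, Set.mem_insert_iff, Set.mem_singleton_iff] at huX
      rcases huX with rfl | rfl | rfl | rfl | rfl | rfl | rfl | rfl | rfl
      exacts [c0 hu, ch hu, cl1 hu, cl2 hu, cl3 hu, cr1 hu, cr2 hu, cr3 hu, cb hu]
    obtain ⟨x, hx⟩ := hS
    obtain ⟨v', hv'S, hv'card⟩ := hH'dec (Subtype.val ⁻¹' S) ⟨⟨x, hSX hx⟩, hx⟩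
    refine ⟨↑v', hv'S, ?_⟩
    have hsub : S ∩ (G \ H).neighborSet ↑v' ⊆
        Subtype.val '' ((Subtype.val ⁻¹' S) ∩ (G.induce Xᶜ \ H').neighborSet v') := by
      rintro u ⟨huS, hadj⟩
      rw [SimpleGraph.mem_neighborSet, SimpleGraph.sdiff_adj] at hadj
      refine ⟨⟨u, hSX huS⟩, ⟨huS, ?_⟩, rfl⟩
      rw [SimpleGraph.mem_neighborSet, SimpleGraph.sdiff_adj]
      refine ⟨hadj.1, ?_⟩
      intro hH'
      exact hadj.2 ((SimpleGraph.sup_adj _ _ _ _).mpr (Or.inl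
        ((SimpleGraph.map_adj _ _ _ _).mpr ⟨v', ⟨u, hSX huS⟩, hH', rfl, rfl⟩)))
    calc (S ∩ (G \ H).neighborSet ↑v').ncard
        ≤ (Subtype.val '' ((Subtype.val ⁻¹' S) ∩ (G.induce Xᶜ \ H').neighborSet v')).ncard :=
          Set.ncard_le_ncard hsub (Set.toFinite _)
      _ = ((Subtype.val ⁻¹' S) ∩ (G.induce Xᶜ \ H').neighborSet v').ncard :=
          Set.ncard_image_of_injective _ Subtype.val_injective
      _ ≤ 2 := hv'card
end

section
/- Let G be a finite simple graph containing nine distinct vertices v0, h, l1, l2, l3, r1, r2, r3, b such that the induced subgraph of G on X = {v0, h, l1, l2, l3, r1, r2, r3, b} has edge set exactly the union of the 4-cycle v0 l3 b r3, the 5-cycle v0 h l1 l2 l3, and the 5-cycle v0 h r1 r2 r3 (that is, exactly the 11 edges v0l3, l3b, br3, r3v0, v0h, hl1, l1l2, l2l3, hr1, r1r2, r2r3), and such that deg_G(v0) = deg_G(l1) = deg_G(r2) = 3 and deg_G(h) = deg_G(l2) = deg_G(l3) = deg_G(r1) = deg_G(r3) = deg_G(b) = 4. If G − X is (2,1)-decomposable,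 then G is (2,1)-decomposable. -/
lemma aux_bound4 {V : Type*} [Fintype V]
    (G H : SimpleGraph V) (S : Set V) (x p q : V)
    (hp : p ∈ G.neighborSet x) (hq : q ∈ G.neighborSet x) (hpq : p ≠ q)
    (hcard : (G.neighborSet x).ncard = 4)
    (hHp : H.Adj x p) (hqS : q ∉ S) :
    (S ∩ (G \ H).neighborSet x).ncard ≤ 2 := by
  have hsub : S ∩ (G \ H).neighborSet x ⊆ G.neighborSet x \ {p, q} := by
    rintro w ⟨hwS, hw⟩
    rw [SimpleGraph.mem_neighborSet, SimpleGraph.sdiff_adj] at hw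
    refine ⟨hw.1, ?_⟩
    rintro (rfl | rfl)
    · exact hw.2 hHp
    · exact hqS hwS
  have h2 : ({p, q} : Set V) ⊆ G.neighborSet x := by
    rintro w (rfl | rfl) <;> assumption
  calc (S ∩ (G \ H).neighborSet x).ncard ≤ (G.neighborSet x \ {p,q}).ncard :=
        Set.ncard_le_ncard hsub (Set.toFinite _)
    _ = 4 - 2 := by rw [Set.ncard_diff h2 (Set.toFinite _), hcard, Set.ncard_pair hpq]
    _ ≤ 2 := le_rfl

lemma aux_bound3 {V : Type*} [Fintype V]
    (G H : SimpleGraph V) (S : Set V) (x p : V)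
    (hp : p ∈ G.neighborSet x)
    (hcard : (G.neighborSet x).ncard = 3)
    (hrem : H.Adj x p ∨ p ∉ S) :
    (S ∩ (G \ H).neighborSet x).ncard ≤ 2 := by
  have hsub : S ∩ (G \ H).neighborSet x ⊆ G.neighborSet x \ {p} := by
    rintro w ⟨hwS, hw⟩
    rw [SimpleGraph.mem_neighborSet, SimpleGraph.sdiff_adj] at hw
    refine ⟨hw.1, ?_⟩
    rintro rfl
    rcases hrem with h1 | h1
    · exact hw.2 h1
    · exact h1 hwS
  calc (S ∩ (G \ H).neighborSet x).ncard ≤ (G.neighborSet x \ {p}).ncard :=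
        Set.ncard_le_ncard hsub (Set.toFinite _)
    _ = 3 - 1 := by
        rw [Set.ncard_diff (by simpa using hp) (Set.toFinite _), hcard, Set.ncard_singleton]
    _ ≤ 2 := le_rfl

set_option maxHeartbeats 8000000

/-- Reducible 'light 3-vertex' configuration of Figure 4(c): a 4-cycle
`v₀ l₃ b r₃` together with the 5-cycles `v₀ h l₁ l₂ l₃` and `v₀ h r₁ r₂ r₃`,
inducing exactly these eleven edges. -/
theorem statement9 {V : Type*} [Fintype V] (G : SimpleGraph V)
    (v₀ h l₁ l₂ l₃ r₁ r₂ r₃ b : V)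
    (hne : [v₀, h, l₁, l₂, l₃, r₁, r₂, r₃, b].Pairwise (· ≠ ·))
    (hind : ∀ x ∈ ({v₀, h, l₁, l₂, l₃, r₁, r₂, r₃, b} : Set V),
      ∀ y ∈ ({v₀, h, l₁, l₂, l₃, r₁, r₂, r₃, b} : Set V),
      (G.Adj x y ↔ s(x, y) ∈
        ({s(v₀, l₃), s(l₃, b), s(b, r₃), s(r₃, v₀), s(v₀, h), s(h, l₁), s(l₁, l₂),
          s(l₂, l₃), s(h, r₁), s(r₁, r₂), s(r₂, r₃)} : Set (Sym2 V))))
    (hdv₀ : (G.neighborSet v₀).ncard = 3) (hdh : (G.neighborSet h).ncard = 4)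
    (hdl₁ : (G.neighborSet l₁).ncard = 3) (hdl₂ : (G.neighborSet l₂).ncard = 4)
    (hdl₃ : (G.neighborSet l₃).ncard = 4)
    (hdr₁ : (G.neighborSet r₁).ncard = 4) (hdr₂ : (G.neighborSet r₂).ncard = 3)
    (hdr₃ : (G.neighborSet r₃).ncard = 4) (hdb : (G.neighborSet b).ncard = 4)
    (hdec : (G.induce (({v₀, h, l₁, l₂, l₃, r₁, r₂, r₃, b} : Set V)ᶜ)).IsDecomposable 2 1) :
    G.IsDecomposable 2 1 := by
  -- pairwise distinctness facts
  simp only [List.pairwise_cons, List.mem_cons, List.not_mem_nil, or_false, forall_eq_or_imp,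
    forall_eq, List.Pairwise.nil, and_true] at hne
  obtain ⟨⟨n01, n02, n03, n04, n05, n06, n07, n08⟩, ⟨n12, n13, n14, n15, n16, n17, n18⟩,
    ⟨n23, n24, n25, n26, n27, n28⟩, ⟨n34, n35, n36, n37, n38⟩, ⟨n45, n46, n47, n48⟩,
    ⟨n56, n57, n58⟩, ⟨n67, n68⟩, n78, -⟩ := hne
  set X : Set V := {v₀, h, l₁, l₂, l₃, r₁, r₂, r₃, b} with hX
  obtain ⟨H', hH'le, hH'deg, hH'dec⟩ := hdec
  -- adjacency facts within X
  have memX : ∀ y ∈ [v₀, h, l₁, l₂, l₃, r₁, r₂, r₃, b], y ∈ X := by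
    intro y hy; simp only [List.mem_cons, List.not_mem_nil, or_false] at hy
    simp only [hX, Set.mem_insert_iff, Set.mem_singleton_iff]; tauto
  have adj : ∀ x ∈ [v₀, h, l₁, l₂, l₃, r₁, r₂, r₃, b], ∀ y ∈ [v₀, h, l₁, l₂, l₃, r₁, r₂, r₃, b],
      s(x, y) ∈ ({s(v₀, l₃), s(l₃, b), s(b, r₃), s(r₃, v₀), s(v₀, h), s(h, l₁), s(l₁, l₂),
          s(l₂, l₃), s(h, r₁), s(r₁, r₂), s(r₂, r₃)} : Set (Sym2 V)) → G.Adj x y := by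
    intro x hx y hy hm
    exact (hind x (memX x hx) y (memX y hy)).mpr hm
  have a_v₀l₃ : G.Adj v₀ l₃ := adj _ (by simp) _ (by simp) (by simp)
  have a_l₃b : G.Adj l₃ b := adj _ (by simp) _ (by simp) (by simp)
  have a_br₃ : G.Adj b r₃ := adj _ (by simp) _ (by simp) (by simp)
  have a_r₃v₀ : G.Adj r₃ v₀ := adj _ (by simp) _ (by simp) (by simp)
  have a_v₀h : G.Adj v₀ h := adj _ (by simp) _ (by simp) (by simp)
  have a_hl₁ : G.Adj h l₁ := adj _ (by simp) _ (by simp) (by simp)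
  have a_l₁l₂ : G.Adj l₁ l₂ := adj _ (by simp) _ (by simp) (by simp)
  have a_l₂l₃ : G.Adj l₂ l₃ := adj _ (by simp) _ (by simp) (by simp)
  have a_hr₁ : G.Adj h r₁ := adj _ (by simp) _ (by simp) (by simp)
  have a_r₁r₂ : G.Adj r₁ r₂ := adj _ (by simp) _ (by simp) (by simp)
  have a_r₂r₃ : G.Adj r₂ r₃ := adj _ (by simp) _ (by simp) (by simp)
  -- the matching and the deleted subgraph
  set M : Set (Sym2 V) := {s(h,l₁), s(l₂,l₃), s(b,r₃), s(r₁,r₂)} with hM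
  set H : SimpleGraph V :=
    SimpleGraph.map (Function.Embedding.subtype (· ∈ Xᶜ)) H' ⊔ SimpleGraph.fromEdgeSet M
    with hHdef
  have hMadj : ∀ x y : V, s(x,y) ∈ M → x ≠ y → H.Adj x y := by
    intro x y hm hxy
    rw [hHdef, SimpleGraph.sup_adj]
    exact Or.inr ((SimpleGraph.fromEdgeSet_adj _).mpr ⟨hm, hxy⟩)
  have h_hl₁ : H.Adj h l₁ := hMadj _ _ (by rw [hM]; simp) n12
  have h_l₁h : H.Adj l₁ h := h_hl₁.symm
  have h_l₂l₃ : H.Adj l₂ l₃ := hMadj _ _ (by rw [hM]; simp) n34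
  have h_l₃l₂ : H.Adj l₃ l₂ := h_l₂l₃.symm
  have h_br₃ : H.Adj b r₃ := hMadj _ _ (by rw [hM]; simp) (Ne.symm n78)
  have h_r₃b : H.Adj r₃ b := h_br₃.symm
  have h_r₁r₂ : H.Adj r₁ r₂ := hMadj _ _ (by rw [hM]; simp) n56
  have h_r₂r₁ : H.Adj r₂ r₁ := h_r₁r₂.symm
  refine ⟨H, ?_, ?_, ?_⟩
  · -- H ≤ G
    intro x y hxy
    rw [hHdef, SimpleGraph.sup_adj, SimpleGraph.map_adj] at hxy
    rcases hxy with ⟨u, w, huw, rfl, rfl⟩ | hedge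
    · exact hH'le huw
    · rw [SimpleGraph.fromEdgeSet_adj] at hedge
      obtain ⟨hm, hxy⟩ := hedge
      rw [hM] at hm
      simp only [Set.mem_insert_iff, Set.mem_singleton_iff, Sym2.eq_iff] at hm
      rcases hm with (⟨rfl,rfl⟩|⟨rfl,rfl⟩)|(⟨rfl,rfl⟩|⟨rfl,rfl⟩)|(⟨rfl,rfl⟩|⟨rfl,rfl⟩)|(⟨rfl,rfl⟩|⟨rfl,rfl⟩)
      exacts [a_hl₁, a_hl₁.symm, a_l₂l₃, a_l₂l₃.symm, a_br₃, a_br₃.symm, a_r₁r₂, a_r₁r₂.symm]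
  · -- max degree of H at most 1
    intro v
    by_cases hv : v ∈ X
    · -- v in X : at most the matching partner
      have key : ∀ p : V, (∀ w : V, H.Adj v w → w = p) → (H.neighborSet v).ncard ≤ 1 := by
        intro p hp
        have hsub : H.neighborSet v ⊆ {p} := fun w hw => hp w hw
        calc (H.neighborSet v).ncard ≤ ({p} : Set V).ncard :=
              Set.ncard_le_ncard hsub (Set.toFinite _)
          _ = 1 := Set.ncard_singleton p
      have noMap : ∀ w : V, H.Adj v w → s(v, w) ∈ M := by
        intro w hw
        rw [hHdef, SimpleGraph.sup_adj, SimpleGraph.map_adj] at hw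
        rcases hw with ⟨u, u', huw, hu, rfl⟩ | hedge
        · exact absurd hv (by
            have hu' : (u : V) = v := hu
            exact hu' ▸ u.2)
        · rw [SimpleGraph.fromEdgeSet_adj] at hedge
          exact hedge.1
      simp only [hX, Set.mem_insert_iff, Set.mem_singleton_iff] at hv
      rcases hv with rfl|rfl|rfl|rfl|rfl|rfl|rfl|rfl|rfl
      · refine key v fun w hw => ?_
        have hm := noMap w hw
        rw [hM] at hm
        simp only [Set.mem_insert_iff, Set.mem_singleton_iff, Sym2.eq_iff] at hm
        tauto
      · refine key l₁ fun w hw => ?_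
        have hm := noMap w hw
        rw [hM] at hm
        simp only [Set.mem_insert_iff, Set.mem_singleton_iff, Sym2.eq_iff] at hm
        tauto
      · refine key h fun w hw => ?_
        have hm := noMap w hw
        rw [hM] at hm
        simp only [Set.mem_insert_iff, Set.mem_singleton_iff, Sym2.eq_iff] at hm
        tauto
      · refine key l₃ fun w hw => ?_
        have hm := noMap w hw
        rw [hM] at hm
        simp only [Set.mem_insert_iff, Set.mem_singleton_iff, Sym2.eq_iff] at hm
        tauto
      · refine key l₂ fun w hw => ?_
        have hm := noMap w hw
        rw [hM] at hm
        simp only [Set.mem_insert_iff, Set.mem_singleton_iff, Sym2.eq_iff] at hm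
        tauto
      · refine key r₂ fun w hw => ?_
        have hm := noMap w hw
        rw [hM] at hm
        simp only [Set.mem_insert_iff, Set.mem_singleton_iff, Sym2.eq_iff] at hm
        tauto
      · refine key r₁ fun w hw => ?_
        have hm := noMap w hw
        rw [hM] at hm
        simp only [Set.mem_insert_iff, Set.mem_singleton_iff, Sym2.eq_iff] at hm
        tauto
      · refine key b fun w hw => ?_
        have hm := noMap w hw
        rw [hM] at hm
        simp only [Set.mem_insert_iff, Set.mem_singleton_iff, Sym2.eq_iff] at hm
        tauto
      · refine key r₃ fun w hw => ?_
        have hm := noMap w hw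
        rw [hM] at hm
        simp only [Set.mem_insert_iff, Set.mem_singleton_iff, Sym2.eq_iff] at hm
        tauto
    · -- v outside X : only the H' neighbours
      have hv' : v ∈ Xᶜ := hv
      have himg : H.neighborSet v = Subtype.val '' (H'.neighborSet ⟨v, hv'⟩) := by
        ext w
        simp only [SimpleGraph.mem_neighborSet, hHdef, SimpleGraph.sup_adj,
          SimpleGraph.map_adj, SimpleGraph.fromEdgeSet_adj, Set.mem_image]
        constructor
        · rintro (⟨u, u', huw, hu, rfl⟩ | ⟨hm, -⟩)
          · have hu' : u = ⟨v, hv'⟩ := Subtype.ext hu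
            subst hu'
            exact ⟨u', huw, rfl⟩
          · exfalso
            apply hv
            rw [hM] at hm
            simp only [Set.mem_insert_iff, Set.mem_singleton_iff, Sym2.eq_iff] at hm
            rw [hX]
            simp only [Set.mem_insert_iff, Set.mem_singleton_iff]
            tauto
        · rintro ⟨w', hw', rfl⟩
          exact Or.inl ⟨⟨v, hv'⟩, w', hw', rfl, rfl⟩
      rw [himg, Set.ncard_image_of_injective _ Subtype.val_injective]
      exact hH'deg ⟨v, hv'⟩
  · -- 2-degeneracy of G \ H
    intro S hS
    by_cases hSr₂ : r₂ ∈ S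
    · exact ⟨r₂, hSr₂, aux_bound3 G H S r₂ r₁ a_r₁r₂.symm hdr₂ (Or.inl h_r₂r₁)⟩
    by_cases hSr₃ : r₃ ∈ S
    · exact ⟨r₃, hSr₃, aux_bound4 G H S r₃ b r₂ a_br₃.symm a_r₂r₃.symm (Ne.symm n68)
        hdr₃ h_r₃b hSr₂⟩
    by_cases hSv₀ : v₀ ∈ S
    · exact ⟨v₀, hSv₀, aux_bound3 G H S v₀ r₃ a_r₃v₀.symm hdv₀ (Or.inr hSr₃)⟩
    by_cases hSl₁ : l₁ ∈ S
    · exact ⟨l₁, hSl₁, aux_bound3 G H S l₁ h a_hl₁.symm hdl₁ (Or.inl h_l₁h)⟩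
    by_cases hSl₂ : l₂ ∈ S
    · exact ⟨l₂, hSl₂, aux_bound4 G H S l₂ l₃ l₁ a_l₂l₃ a_l₁l₂.symm (Ne.symm n24)
        hdl₂ h_l₂l₃ hSl₁⟩
    by_cases hSl₃ : l₃ ∈ S
    · exact ⟨l₃, hSl₃, aux_bound4 G H S l₃ l₂ v₀ a_l₂l₃.symm a_v₀l₃.symm (Ne.symm n03)
        hdl₃ h_l₃l₂ hSv₀⟩
    by_cases hSh : h ∈ S
    · exact ⟨h, hSh, aux_bound4 G H S h l₁ v₀ a_hl₁ a_v₀h.symm (Ne.symm n02)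
        hdh h_hl₁ hSv₀⟩
    by_cases hSb : b ∈ S
    · exact ⟨b, hSb, aux_bound4 G H S b r₃ l₃ a_br₃ a_l₃b.symm (Ne.symm n47)
        hdb h_br₃ hSl₃⟩
    by_cases hSr₁ : r₁ ∈ S
    · exact ⟨r₁, hSr₁, aux_bound4 G H S r₁ r₂ h a_r₁r₂ a_hr₁.symm (Ne.symm n16)
        hdr₁ h_r₁r₂ hSh⟩
    -- all of X avoided : use degeneracy outside X
    have hSX : S ⊆ Xᶜ := by
      intro w hw hwX
      simp only [hX, Set.mem_insert_iff, Set.mem_singleton_iff] at hwX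
      rcases hwX with rfl|rfl|rfl|rfl|rfl|rfl|rfl|rfl|rfl <;> tauto
    set S' : Set ↥(Xᶜ) := Subtype.val ⁻¹' S with hS'
    obtain ⟨w, hwS⟩ := hS
    have hS'ne : S'.Nonempty := ⟨⟨w, hSX hwS⟩, hwS⟩
    obtain ⟨u, huS', hu⟩ := hH'dec S' hS'ne
    refine ⟨↑u, huS', ?_⟩
    have hsub : S ∩ (G \ H).neighborSet ↑u ⊆
        Subtype.val '' (S' ∩ ((G.induce Xᶜ) \ H').neighborSet u) := by
      rintro w' ⟨hw'S, hw'⟩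
      rw [SimpleGraph.mem_neighborSet, SimpleGraph.sdiff_adj] at hw'
      have hw'X : w' ∈ Xᶜ := hSX hw'S
      refine ⟨⟨w', hw'X⟩, ⟨hw'S, ?_⟩, rfl⟩
      rw [SimpleGraph.mem_neighborSet, SimpleGraph.sdiff_adj]
      constructor
      · exact hw'.1
      · intro hH'adj
        apply hw'.2
        rw [hHdef, SimpleGraph.sup_adj]
        left
        rw [SimpleGraph.map_adj]
        exact ⟨u, ⟨w', hw'X⟩, hH'adj, rfl, rfl⟩
    calc (S ∩ (G \ H).neighborSet ↑u).ncard
        ≤ (Subtype.val '' (S' ∩ ((G.induce Xᶜ) \ H').neighborSet u)).ncard :=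
          Set.ncard_le_ncard hsub (Set.toFinite _)
      _ = (S' ∩ ((G.induce Xᶜ) \ H').neighborSet u).ncard :=
          Set.ncard_image_of_injective _ Subtype.val_injective
      _ ≤ 2 := hu
end

section
/- Let G be a finite simple graph and let d, h be natural numbers. If G is (d,h)-decomposable, then G is h-defective (d+1)-choosable: for every assignment L of a set of at least d+1 colors to each vertex of G, there is a coloring c of the vertices with c(v) ∈ L(v) for every vertex v, such that every vertex has at most h neighbors receiving the same color as itself. -/
/-- Every `(d, h)`-decomposable graph is `h`-defective `(d + 1)`-choosable: for
every list assignment giving each vertex at least `d + 1` colors there is a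
coloring from the lists in which every vertex has at most `h` neighbors of its
own color. -/
theorem statement12 {V : Type*} [Fintype V] (G : SimpleGraph V) (d h : ℕ)
    (hdec : G.IsDecomposable d h) :
    ∀ (α : Type) (L : V → Finset α), (∀ v, d + 1 ≤ (L v).card) →
      ∃ c : V → α, (∀ v, c v ∈ L v) ∧
        ∀ v, {u | G.Adj v u ∧ c u = c v}.ncard ≤ h := by
  classical
  obtain ⟨H, hHG, hHdeg, hdeg⟩ := hdec
  intro α L hL
  have key : ∀ n (S : Finset V), S.card = n → ∃ c : V → α, (∀ v, c v ∈ L v) ∧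
      ∀ v ∈ S, ∀ u ∈ S, (G \ H).Adj v u → c u ≠ c v := by
    intro n
    induction n with
    | zero =>
      intro S hS
      rw [Finset.card_eq_zero] at hS
      subst hS
      refine ⟨fun v => (Finset.card_pos.mp
        (lt_of_lt_of_le (Nat.succ_pos d) (hL v))).choose, fun v =>
        (Finset.card_pos.mp (lt_of_lt_of_le (Nat.succ_pos d) (hL v))).choose_spec,
        by simp⟩
    | succ n ih =>
      intro S hS
      have hSne : (↑S : Set V).Nonempty := by
        rw [Finset.coe_nonempty, ← Finset.card_pos, hS]; omega
      obtain ⟨v, hvS, hvdeg⟩ := hdeg ↑S hSne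
      obtain ⟨c, hc1, hc2⟩ := ih (S.erase v)
        (by rw [Finset.card_erase_of_mem hvS, hS]; omega)
      set N : Finset α := (S.filter fun u => (G \ H).Adj v u).image c with hN
      have hfilter : ((S.filter fun u => (G \ H).Adj v u) : Set V)
          = ↑S ∩ (G \ H).neighborSet v := by
        ext u; simp [SimpleGraph.mem_neighborSet, and_comm]
      have hNcard : N.card ≤ d := by
        calc N.card ≤ (S.filter fun u => (G \ H).Adj v u).card :=
              Finset.card_image_le
          _ = ((S.filter fun u => (G \ H).Adj v u : Finset V) : Set V).ncard :=
              (Set.ncard_coe_finset _).symm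
          _ = (↑S ∩ (G \ H).neighborSet v).ncard := by rw [hfilter]
          _ ≤ d := hvdeg
      have hlt : N.card < (L v).card := lt_of_le_of_lt hNcard (hL v)
      have hne : (L v \ N).Nonempty := Finset.sdiff_nonempty.mpr
        (fun hsub => absurd (Finset.card_le_card hsub) (by omega))
      obtain ⟨a, ha⟩ := hne
      rw [Finset.mem_sdiff] at ha
      obtain ⟨haL, haN⟩ := ha
      refine ⟨Function.update c v a, fun u => ?_, ?_⟩
      · by_cases hu : u = v
        · subst hu; simpa using haL
        · rw [Function.update_of_ne hu]; exact hc1 u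
      · intro x hx u hu hadj hcontra
        have hxu : x ≠ u := hadj.ne
        by_cases hxv : x = v
        · subst hxv
          have huv : u ≠ x := fun h => hxu h.symm
          rw [Function.update_of_ne huv, Function.update_self] at hcontra
          exact haN (hcontra ▸ Finset.mem_image_of_mem c
            (Finset.mem_filter.mpr ⟨hu, hadj⟩))
        · by_cases huv : u = v
          · subst huv
            rw [Function.update_of_ne hxv, Function.update_self] at hcontra
            exact haN (hcontra ▸ Finset.mem_image_of_mem c
              (Finset.mem_filter.mpr ⟨hx, hadj.symm⟩))
          · rw [Function.update_of_ne hxv, Function.update_of_ne huv] at hcontra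
            exact hc2 x (Finset.mem_erase.mpr ⟨hxv, hx⟩)
              u (Finset.mem_erase.mpr ⟨huv, hu⟩) hadj hcontra
  obtain ⟨c, hc1, hc2⟩ := key (Finset.univ.card) Finset.univ rfl
  refine ⟨c, hc1, fun v => ?_⟩
  have hsub : {u | G.Adj v u ∧ c u = c v} ⊆ H.neighborSet v := by
    intro u ⟨hadj, hcu⟩
    by_contra hH
    exact hc2 v (Finset.mem_univ v) u (Finset.mem_univ u)
      ((SimpleGraph.sdiff_adj G H v u).mpr ⟨hadj, hH⟩) hcu
  exact le_trans (Set.ncard_le_ncard hsub (Set.toFinite _)) (hHdeg v)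
end
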